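/- arXiv:1603.06122 — 3 statements merged into one kernel-verified Lean document; each statement's English description precedes it below -/
import Mathlib

section
/- Let (f,C) be a low-defect pair of degree r. Then the function δ_{f,C} : ℤ≥0^r → ℝ is strictly increasing in each variable, and sup over all (k₁,…,k_r) ∈ ℤ≥0^r of δ_{f,C}(k₁,…,k_r) equals δ(f,C). -/
/-- `CpxW n k` : the positive integer `n` can be written using exactly `k` ones,
with an arbitrary combination of additions and multiplications. -/
inductive CpxW : ℕ → ℕ → Prop
  | one : CpxW 1 1
  | add {a b m n : ℕ} : CpxW a m → CpxW b n → CpxW (a + b) (m + n)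
  | mul {a b m n : ℕ} : CpxW a m → CpxW b n → CpxW (a * b) (m + n)

/-- The integer complexity `‖n‖`: the least number of 1's needed to write `n`
using additions and multiplications. -/
noncomputable def cpx (n : ℕ) : ℕ := sInf {k | CpxW n k}

/-- The defect `δ(n) = ‖n‖ - 3 log₃ n`. -/
noncomputable def defect (n : ℕ) : ℝ := (cpx n : ℝ) - 3 * Real.logb 3 (n : ℝ)

/-- `LDP r f C` : `(f, C)` is a low-defect pair of degree `r`; here a low-defect
polynomial of degree `r` is written in the variables `X 0, …, X (r-1)`. -/
inductive LDP : ℕ → MvPolynomial ℕ ℤ → ℕ → Prop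
  | const (k C : ℕ) (hk : 0 < k) (hC : cpx k ≤ C) :
      LDP 0 (MvPolynomial.C (k : ℤ)) C
  | mul {r₁ r₂ : ℕ} {f₁ f₂ : MvPolynomial ℕ ℤ} {C₁ C₂ : ℕ} :
      LDP r₁ f₁ C₁ → LDP r₂ f₂ C₂ →
      LDP (r₁ + r₂) (f₁ * MvPolynomial.rename (· + r₁) f₂) (C₁ + C₂)
  | step {r : ℕ} {f : MvPolynomial ℕ ℤ} {C : ℕ} (c D : ℕ) (hc : 0 < c) (hD : cpx c ≤ D) :
      LDP r f C → LDP (r + 1) (f * MvPolynomial.X r + MvPolynomial.C (c : ℤ)) (C + D)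

/-- A low-defect polynomial: the first component of some low-defect pair. -/
def LowDefectPoly (f : MvPolynomial ℕ ℤ) : Prop := ∃ r C, LDP r f C

/-- The leading coefficient of a low-defect polynomial of degree `r`:
the coefficient of `x₁ ⋯ x_r`. -/
noncomputable def leadCoeff (r : ℕ) (f : MvPolynomial ℕ ℤ) : ℤ :=
  MvPolynomial.coeff (∑ i ∈ Finset.range r, Finsupp.single i 1) f

/-- The defect `δ(f,C) = C - 3 log₃ a` of a low-defect pair of degree `r`,
where `a` is the leading coefficient. -/
noncomputable def pairDft (r : ℕ) (f : MvPolynomial ℕ ℤ) (C : ℕ) : ℝ :=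
  (C : ℝ) - 3 * Real.logb 3 ((leadCoeff r f : ℤ) : ℝ)

/-- `f(3^{k₁}, …, 3^{k_r})` for a polynomial of degree `r`. -/
noncomputable def eval3 (r : ℕ) (f : MvPolynomial ℕ ℤ) (k : ℕ → ℕ) : ℤ :=
  MvPolynomial.eval (fun i => if i < r then (3 : ℤ) ^ (k i) else 1) f

/-- `δ_{f,C}(k₁,…,k_r) = C + 3(k₁+⋯+k_r) - 3 log₃ f(3^{k₁},…,3^{k_r})`. -/
noncomputable def dftF (r : ℕ) (f : MvPolynomial ℕ ℤ) (C : ℕ) (k : ℕ → ℕ) : ℝ :=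
  (C : ℝ) + 3 * (∑ i ∈ Finset.range r, (k i : ℝ))
    - 3 * Real.logb 3 ((eval3 r f k : ℤ) : ℝ)

/-- The nesting order: `NestLe f i j` means `xᵢ ⪯ xⱼ`, i.e. every monomial of `f`
divisible by `xᵢ` is divisible by `xⱼ`. -/
def NestLe (f : MvPolynomial ℕ ℤ) (i j : ℕ) : Prop :=
  ∀ m ∈ f.support, m i ≠ 0 → m j ≠ 0

/-- `xᵢ` is a variable of (the degree-`r` polynomial) `f` that is minimal with
respect to the nesting order. -/
def IsMinVar (r : ℕ) (f : MvPolynomial ℕ ℤ) (i : ℕ) : Prop :=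
  i < r ∧ ∀ j < r, NestLe f j i → NestLe f i j

/-- Substituting `3^k` for the variable `xᵢ` of `f`, renumbering the later
variables down by one. -/
noncomputable def truncAt (f : MvPolynomial ℕ ℤ) (i k : ℕ) : MvPolynomial ℕ ℤ :=
  MvPolynomial.aeval (fun j => if j < i then MvPolynomial.X j
    else if j = i then MvPolynomial.C ((3 : ℤ) ^ k) else MvPolynomial.X (j - 1)) f

/-- A direct truncation of a "pair with degree" `(r, f, C)`: substitute `3^k`
into a variable of `f` minimal in the nesting order. -/
def DirectTrunc (a b : ℕ × MvPolynomial ℕ ℤ × ℕ) : Prop :=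
  ∃ i k : ℕ, a.1 = b.1 + 1 ∧ IsMinVar a.1 a.2.1 i ∧
    b.2.1 = truncAt a.2.1 i k ∧ b.2.2 = a.2.2 + 3 * k

/-- `n` is a leader: either `3 ∤ n`, or `3 ∣ n` and `‖n‖ < ‖n/3‖ + 3`. -/
def IsLeader (n : ℕ) : Prop := 0 < n ∧ (3 ∣ n → cpx n < cpx (n / 3) + 3)

/-- `(f, C)` (of degree `r`) efficiently 3-represents `n`. -/
def EffRep (r : ℕ) (f : MvPolynomial ℕ ℤ) (C : ℕ) (n : ℕ) : Prop :=
  ∃ k : ℕ → ℕ, (n : ℤ) = eval3 r f k ∧ cpx n = C + 3 * ∑ i ∈ Finset.range r, k i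

/-- The number of `∗`-entries (free coordinates) of `p` among `0, …, r-1`. -/
def starCount (r : ℕ) (p : ℕ → Option ℕ) : ℕ :=
  ((Finset.range r).filter (fun i => p i = none)).card

/-- The 3-substitution of a tuple `p ∈ (ℤ≥0 ∪ {∗})^r` into `f`: substitute
`3^{kᵢ}` for `xᵢ` whenever `p i = some kᵢ`, renumbering the surviving variables
in increasing order. -/
noncomputable def subst3 (f : MvPolynomial ℕ ℤ) (p : ℕ → Option ℕ) : MvPolynomial ℕ ℤ :=
  MvPolynomial.aeval (fun j =>
    match p j with
    | some k => MvPolynomial.C ((3 : ℤ) ^ k)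
    | none => MvPolynomial.X (((Finset.range j).filter (fun i => p i = none)).card)) f

/-- The insertion map `ι` associated to `p`: inserts the arguments into the
coordinates of `p` equal to `∗`. -/
def iotaMap (p : ℕ → Option ℕ) (ℓ : ℕ → ℕ) : ℕ → ℕ := fun j =>
  match p j with
  | some k => k
  | none => ℓ (((Finset.range j).filter (fun i => p i = none)).card)

/-!
A low-defect polynomial `f` of degree `r` has nonnegative coefficients, a positive constant term
and a positive leading coefficient `a`, and every monomial divides `x₀ ⋯ x_{r-1}`. Hence
`f(3^k) / 3^(k₀ + ⋯ + k_{r-1}) = ∑ₘ cₘ 3^(-∑_{i ∉ m} kᵢ)`, which is at least `a`, strictly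
decreasing in each `kᵢ` (already the constant term is), and tends to `a` along `k = (t, …, t)`.
Since `δ_{f,C}(k) = C - 3 log₃` of this quantity, both claims follow.
-/

open MvPolynomial Finset Filter Topology

noncomputable def topMonomial (r : ℕ) : ℕ →₀ ℕ := ∑ i ∈ range r, Finsupp.single i 1

lemma topMonomial_apply (r j : ℕ) : topMonomial r j = if j < r then 1 else 0 := by
  simp [topMonomial, Finsupp.finsetSum_apply, Finsupp.single_apply]

lemma topMonomial_succ (r : ℕ) : topMonomial (r + 1) = topMonomial r + Finsupp.single r 1 :=
  sum_range_succ _ _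

lemma topMonomial_add (r₁ r₂ : ℕ) :
    topMonomial (r₁ + r₂) = topMonomial r₁ + Finsupp.mapDomain (· + r₁) (topMonomial r₂) := by
  simp only [topMonomial, sum_range_add, Finsupp.mapDomain_finsetSum, Finsupp.mapDomain_single,
    add_comm _ r₁]

lemma weight_topMonomial (w : ℕ → ℕ) (r : ℕ) :
    Finsupp.weight w (topMonomial r) = ∑ i ∈ range r, w i := by
  simp [topMonomial, Finsupp.weight_single]

lemma leadCoeff_eq_coeff (r : ℕ) (f : MvPolynomial ℕ ℤ) :
    leadCoeff r f = f.coeff (topMonomial r) := rfl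

namespace LDP

variable {r C : ℕ} {f : MvPolynomial ℕ ℤ}

lemma exists_eq_map (h : LDP r f C) : ∃ g : MvPolynomial ℕ ℕ, map (Nat.castRingHom ℤ) g = f := by
  induction h with
  | const k _ _ _ => exact ⟨MvPolynomial.C k, by simp⟩
  | @mul r₁ _ _ _ _ _ _ _ ih₁ ih₂ =>
    obtain ⟨g₁, rfl⟩ := ih₁
    obtain ⟨g₂, rfl⟩ := ih₂
    exact ⟨g₁ * rename (· + r₁) g₂, by rw [map_mul, map_rename]⟩
  | @step r _ _ c _ _ _ _ ih =>
    obtain ⟨g, rfl⟩ := ih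
    exact ⟨g * X r + MvPolynomial.C c, by simp⟩

lemma coeff_nonneg (h : LDP r f C) (m : ℕ →₀ ℕ) : 0 ≤ f.coeff m := by
  obtain ⟨g, rfl⟩ := h.exists_eq_map
  simp [coeff_map]

lemma le_topMonomial (h : LDP r f C) {m : ℕ →₀ ℕ} (hm : m ∈ f.support) : m ≤ topMonomial r := by
  classical
  induction h generalizing m with
  | const =>
    rw [Finset.mem_singleton.mp (support_monomial_subset hm)]
    exact zero_le
  | @mul r₁ r₂ f₁ f₂ _ _ _ _ ih₁ ih₂ =>
    obtain ⟨u, hu, v, hv, rfl⟩ := Finset.mem_add.mp (support_mul _ _ hm)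
    rw [support_rename_of_injective (add_left_injective r₁)] at hv
    obtain ⟨d, hd, rfl⟩ := Finset.mem_image.mp hv
    rw [topMonomial_add]
    exact add_le_add (ih₁ hu) (Finsupp.mapDomain_mono (ih₂ hd))
  | step _ _ _ _ _ ih =>
    rcases Finset.mem_union.mp (support_add hm) with hm | hm
    · rw [support_mul_X] at hm
      obtain ⟨u, hu, rfl⟩ := Finset.mem_map.mp hm
      rw [topMonomial_succ]
      exact add_le_add (ih hu) le_rfl
    · rw [Finset.mem_singleton.mp (support_monomial_subset hm)]
      exact zero_le

lemma coeff_zero_pos (h : LDP r f C) : 0 < f.coeff 0 := by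
  simp only [← constantCoeff_eq]
  induction h with
  | const _ _ hk _ => simpa using hk
  | mul _ _ ih₁ ih₂ =>
    rw [map_mul, constantCoeff_rename]
    exact mul_pos ih₁ ih₂
  | step _ _ hc _ _ _ => simpa using hc

lemma leadCoeff_pos (h : LDP r f C) : 0 < leadCoeff r f := by
  induction h with
  | const _ _ hk _ =>
    rw [leadCoeff_eq_coeff, topMonomial, sum_range_zero, coeff_zero_C]
    exact_mod_cast hk
  | @mul r₁ r₂ f₁ f₂ _ _ h₁ h₂ ih₁ ih₂ =>
    rw [leadCoeff_eq_coeff, coeff_mul, topMonomial_add]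
    have hrename : ∀ m, 0 ≤ (rename (· + r₁) f₂).coeff m := by
      obtain ⟨g, rfl⟩ := h₂.exists_eq_map
      intro m
      rw [← map_rename]
      simp [coeff_map]
    calc 0 < f₁.coeff (topMonomial r₁) * f₂.coeff (topMonomial r₂) := mul_pos ih₁ ih₂
      _ ≤ _ := by
        rw [← coeff_rename_mapDomain _ (add_left_injective r₁) f₂]
        have hmem : (topMonomial r₁, Finsupp.mapDomain (· + r₁) (topMonomial r₂)) ∈
            antidiagonal (topMonomial r₁ + Finsupp.mapDomain (· + r₁) (topMonomial r₂)) :=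
          mem_antidiagonal.mpr rfl
        exact Finset.single_le_sum (fun p _ => mul_nonneg (h₁.coeff_nonneg p.1) (hrename p.2)) hmem
  | step _ _ _ _ _ ih =>
    rw [leadCoeff_eq_coeff, topMonomial_succ, coeff_add, coeff_mul_X, coeff_C]
    exact add_pos_of_pos_of_nonneg ih (by split_ifs <;> simp)

end LDP

namespace Finsupp

variable {σ : Type*} {w w' : σ → ℕ}

lemma weight_le_weight (h : w ≤ w') (d : σ →₀ ℕ) : weight w d ≤ weight w' d := by
  simp only [weight_apply, Finsupp.sum, smul_eq_mul]
  exact Finset.sum_le_sum fun j _ => Nat.mul_le_mul le_rfl (h j)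

lemma weight_lt_weight (h : w ≤ w') {d : σ →₀ ℕ} {i : σ} (hi : d i ≠ 0) (hlt : w i < w' i) :
    weight w d < weight w' d := by
  simp only [weight_apply, Finsupp.sum, smul_eq_mul]
  exact Finset.sum_lt_sum (fun j _ => Nat.mul_le_mul le_rfl (h j))
    ⟨i, mem_support_iff.mpr hi, Nat.mul_lt_mul_of_pos_left hlt (Nat.pos_of_ne_zero hi)⟩

lemma weight_const (t : ℕ) (d : σ →₀ ℕ) : weight (fun _ => t) d = degree d * t := by
  simp only [weight_apply, Finsupp.sum, smul_eq_mul, degree_apply]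
  exact (Finset.sum_mul ..).symm

end Finsupp

lemma tendsto_inv_three_pow_weight_const (d : ℕ →₀ ℕ) :
    Tendsto (fun t : ℕ => (3⁻¹ : ℝ) ^ Finsupp.weight (fun _ => t) d) atTop
      (𝓝 (if d = 0 then 1 else 0)) := by
  simp only [Finsupp.weight_const, pow_mul]
  split_ifs with hd
  · simp [hd]
  · refine tendsto_pow_atTop_nhds_zero_of_lt_one (by positivity) (pow_lt_one₀ (by norm_num)
      (by norm_num) ?_)
    rwa [Ne, Finsupp.degree_eq_zero_iff]

section scaledEval3

variable {r : ℕ} {f : MvPolynomial ℕ ℤ}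

lemma eval3_eq_sum (hsupp : ∀ m ∈ f.support, m ≤ topMonomial r) (k : ℕ → ℕ) :
    eval3 r f k = ∑ m ∈ f.support, f.coeff m * 3 ^ Finsupp.weight k m := by
  rw [eval3, eval_eq]
  refine sum_congr rfl fun m hm => congrArg _ ?_
  rw [Finsupp.weight_apply, Finsupp.sum, ← prod_pow_eq_pow_sum]
  refine prod_congr rfl fun i hi => ?_
  have hir : i < r := by
    have := (hsupp m hm) i
    rw [topMonomial_apply] at this
    split_ifs at this with h
    · exact h
    · exact absurd (Nat.le_zero.mp this) (Finsupp.mem_support_iff.mp hi)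
  rw [if_pos hir, ← pow_mul, smul_eq_mul, mul_comm]

noncomputable def scaledEval3 (r : ℕ) (f : MvPolynomial ℕ ℤ) (k : ℕ → ℕ) : ℝ :=
  eval3 r f k / 3 ^ ∑ i ∈ range r, k i

lemma scaledEval3_eq_sum (hsupp : ∀ m ∈ f.support, m ≤ topMonomial r) (k : ℕ → ℕ) :
    scaledEval3 r f k =
      ∑ m ∈ f.support, ((f.coeff m : ℤ) : ℝ) * 3⁻¹ ^ Finsupp.weight k (topMonomial r - m) := by
  rw [scaledEval3, eval3_eq_sum hsupp, ← weight_topMonomial]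
  push_cast
  rw [sum_div]
  refine sum_congr rfl fun m hm => ?_
  rw [← add_tsub_cancel_of_le (hsupp m hm), map_add, add_tsub_cancel_left, pow_add, inv_pow]
  field_simp

lemma dftF_eq_sub_logb_scaledEval3 (C : ℕ) {k : ℕ → ℕ} (h : scaledEval3 r f k ≠ 0) :
    dftF r f C k = C - 3 * Real.logb 3 (scaledEval3 r f k) := by
  rw [dftF, scaledEval3, Real.logb_div (div_ne_zero_iff.mp h).1 (by positivity), Real.logb_pow,
    Real.logb_self_eq_one (by norm_num), Nat.cast_sum]
  ring

lemma leadCoeff_le_scaledEval3 (hsupp : ∀ m ∈ f.support, m ≤ topMonomial r)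
    (hnonneg : ∀ m, 0 ≤ f.coeff m) (k : ℕ → ℕ) : (leadCoeff r f : ℝ) ≤ scaledEval3 r f k := by
  have hterm : ∀ m ∈ f.support,
      0 ≤ ((f.coeff m : ℤ) : ℝ) * 3⁻¹ ^ Finsupp.weight k (topMonomial r - m) := fun m _ => mul_nonneg (by exact_mod_cast hnonneg m) (by positivity)
  rw [scaledEval3_eq_sum hsupp]
  by_cases htop : topMonomial r ∈ f.support
  · simpa [leadCoeff_eq_coeff] using single_le_sum hterm htop
  · rw [leadCoeff_eq_coeff, notMem_support_iff.mp htop, Int.cast_zero]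
    exact sum_nonneg hterm

lemma scaledEval3_update_strictAnti (hsupp : ∀ m ∈ f.support, m ≤ topMonomial r)
    (hnonneg : ∀ m, 0 ≤ f.coeff m) (hconst : 0 < f.coeff 0) (k : ℕ → ℕ) {i : ℕ} (hi : i < r) :
    StrictAnti fun m => scaledEval3 r f (Function.update k i m) := by
  intro m m' hlt
  simp only [scaledEval3_eq_sum hsupp]
  refine sum_lt_sum (fun d _ => ?_) ⟨0, mem_support_iff.mpr hconst.ne', ?_⟩
  · refine mul_le_mul_of_nonneg_left (pow_le_pow_of_le_one (by positivity) (by norm_num) ?_)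
      (by exact_mod_cast hnonneg d)
    exact Finsupp.weight_le_weight (Function.update_mono hlt.le) _
  · refine mul_lt_mul_of_pos_left (pow_lt_pow_right_of_lt_one₀ (by positivity) (by norm_num) ?_)
      (by exact_mod_cast hconst)
    refine Finsupp.weight_lt_weight (Function.update_mono hlt.le) (i := i) ?_ (by simpa using hlt)
    simp [topMonomial_apply, hi]

lemma tendsto_scaledEval3_const (hsupp : ∀ m ∈ f.support, m ≤ topMonomial r) :
    Tendsto (fun t : ℕ => scaledEval3 r f fun _ => t) atTop (𝓝 (leadCoeff r f)) := by
  simp only [scaledEval3_eq_sum hsupp]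
  have hlim := tendsto_finsetSum f.support fun m _ =>
    (tendsto_inv_three_pow_weight_const (topMonomial r - m)).const_mul ((f.coeff m : ℤ) : ℝ)
  convert hlim using 2
  rw [sum_eq_single (topMonomial r), tsub_self, if_pos rfl, mul_one, leadCoeff_eq_coeff]
  · intro m hm hne
    rw [if_neg (fun h => hne (le_antisymm (hsupp m hm) (tsub_eq_zero_iff_le.mp h))), mul_zero]
  · intro htop
    rw [notMem_support_iff.mp htop, Int.cast_zero, zero_mul]

end scaledEval3

lemma ciSup_eq_of_forall_le_of_tendsto {ι κ α : Type*} [Nonempty ι]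
    [ConditionallyCompleteLinearOrder α] [TopologicalSpace α] [OrderClosedTopology α]
    {l : Filter κ} [l.NeBot] {g : ι → α} {b : α} {φ : κ → ι}
    (hle : ∀ i, g i ≤ b) (hlim : Tendsto (g ∘ φ) l (𝓝 b)) : ⨆ i, g i = b :=
  le_antisymm (ciSup_le hle) <| le_of_tendsto' hlim fun n =>
    le_ciSup ⟨b, Set.forall_mem_range.mpr hle⟩ (φ n)

/-- `δ_{f,C}` is strictly increasing in each variable and its
supremum is `δ(f,C)`. -/
theorem dft_strictMono_sup (r : ℕ) (f : MvPolynomial ℕ ℤ) (C : ℕ) (hf : LDP r f C) :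
    (∀ (k : ℕ → ℕ) (i : ℕ), i < r → ∀ m m' : ℕ, m < m' →
      dftF r f C (Function.update k i m) < dftF r f C (Function.update k i m')) ∧
    (⨆ k : ℕ → ℕ, dftF r f C k) = pairDft r f C := by
  have hsupp : ∀ m ∈ f.support, m ≤ topMonomial r := fun _ => hf.le_topMonomial
  have hlead : (0 : ℝ) < leadCoeff r f := by exact_mod_cast hf.leadCoeff_pos
  have hpos : ∀ k, 0 < scaledEval3 r f k := fun k =>
    hlead.trans_le (leadCoeff_le_scaledEval3 hsupp hf.coeff_nonneg k)
  have hdft : ∀ k, dftF r f C k = C - 3 * Real.logb 3 (scaledEval3 r f k) := fun k =>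
    dftF_eq_sub_logb_scaledEval3 C (hpos k).ne'
  refine ⟨fun k i hi m m' hlt => ?_, ?_⟩
  · have := Real.logb_lt_logb (b := 3) (by norm_num) (hpos _)
      (scaledEval3_update_strictAnti hsupp hf.coeff_nonneg hf.coeff_zero_pos k hi hlt)
    rw [hdft, hdft]
    linarith
  · refine ciSup_eq_of_forall_le_of_tendsto (l := atTop) (φ := fun t _ => t) (fun k => ?_) ?_
    · have := Real.logb_le_logb_of_le (b := 3) (by norm_num) hlead
        (leadCoeff_le_scaledEval3 hsupp hf.coeff_nonneg k)
      rw [hdft, pairDft]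
      linarith
    · simp only [Function.comp_def, hdft, pairDft]
      exact tendsto_const_nhds.sub
        (((tendsto_scaledEval3_const hsupp).logb hlead.ne').const_mul 3)
end

section
/- Let (f,C) be a low-defect pair of degree r, let xᵢ be a variable of f minimal with respect to the nesting order, let k ≥ 0 be an integer, and define g(x₁,…,x_{i−1},x_{i+1},…,x_r) := f(x₁,…,x_{i−1},3^k,x_{i+1},…,x_r). Then: (1) g is a low-defect polynomial and (g, C+3k) is a low-defect pair; (2) if a is the leading coefficient of f, the leading coefficient of g is strictly greater than a·3^k, so δ(g, C+3k) < δ(f,C); (3) the nesting order on the variables of g is the restriction of the nesting order on the variables of f to {x₁,…,x_{i−1},x_{i+1},…,x_r}; (4) for all nonnegative integers k₁,…,k_{i−1},k_{i+1},…,k_r, δ_{g,C+3k}(k₁,…,k_{i−1},k_{i+1},…,k_r) = δ_{f,C}(k₁,…,k_{i−1},k,k_{i+1},…,k_r). -/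
/-- The embedding of `{0,…,r-2}` into `{0,…,r-1}` skipping `i`. -/
def skipEmb (i j : ℕ) : ℕ := if j < i then j else j + 1

/-
Induction along the generation of the low-defect pair. A variable that is minimal for the
nesting order of `f₁ ⊗ f₂` is minimal in the factor containing it, and one that is minimal for
`f ⊗ x + c` is a minimal variable of `f` unless `f` is a constant `a` and the variable is `x`;
then the truncation is the constant `a·3^k + c`, of complexity at most `‖a‖ + 3k + ‖c‖` and larger
than `a·3^k`. Substitution commutes with both constructions, which gives (1) and (2), and (2)
gives the drop of the defect. Parts (3) and (4) hold for every polynomial with nonnegative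
coefficients: the monomials of the truncation are those of `f` with `xᵢ` deleted, because no
cancellation can occur, and evaluating the truncation is evaluating `f` with `3^k` inserted in
position `i`.
-/

open MvPolynomial Finset

theorem cpxW_self {n : ℕ} (hn : 0 < n) : CpxW n n := by
  induction n with
  | zero => omega
  | succ m ih =>
    rcases Nat.eq_zero_or_pos m with rfl | hm
    · exact CpxW.one
    · exact (ih hm).add CpxW.one

theorem cpxW_cpx {n : ℕ} (hn : 0 < n) : CpxW n (cpx n) :=
  Nat.sInf_mem ⟨n, cpxW_self hn⟩

theorem cpx_le_of_cpxW {n k : ℕ} (h : CpxW n k) : cpx n ≤ k := Nat.sInf_le h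

theorem cpx_add_le {a b : ℕ} (ha : 0 < a) (hb : 0 < b) : cpx (a + b) ≤ cpx a + cpx b :=
  cpx_le_of_cpxW ((cpxW_cpx ha).add (cpxW_cpx hb))

theorem cpx_mul_le {a b : ℕ} (ha : 0 < a) (hb : 0 < b) : cpx (a * b) ≤ cpx a + cpx b :=
  cpx_le_of_cpxW ((cpxW_cpx ha).mul (cpxW_cpx hb))

theorem cpx_mul_pow_three_le {a : ℕ} (ha : 0 < a) (k : ℕ) : cpx (a * 3 ^ k) ≤ cpx a + 3 * k := by
  induction k with
  | zero => simp
  | succ k ih =>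
    have h3 : CpxW 3 3 := (CpxW.one.add CpxW.one).add CpxW.one
    have := cpx_le_of_cpxW ((cpxW_cpx (n := a * 3 ^ k) (by positivity)).mul h3)
    rw [pow_succ, ← mul_assoc]
    omega

def insertAt {α : Type*} (i : ℕ) (a : α) (v : ℕ → α) : ℕ → α :=
  fun j => if j < i then v j else if j = i then a else v (j - 1)

theorem comp_insertAt {α β : Type*} (g : α → β) (i : ℕ) (a : α) (v : ℕ → α) :
    g ∘ insertAt i a v = insertAt i (g a) (g ∘ v) := by
  funext j
  simp only [Function.comp_apply, insertAt]
  split_ifs <;> rfl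

theorem sum_range_insertAt {M : Type*} [AddCommMonoid M] {i r : ℕ} (hi : i ≤ r) (a : M)
    (v : ℕ → M) : ∑ j ∈ range (r + 1), insertAt i a v j = a + ∑ j ∈ range r, v j := by
  induction r, hi using Nat.le_induction with
  | base =>
    rw [sum_range_succ, add_comm]
    congr 1
    · simp [insertAt]
    · exact sum_congr rfl fun j hj => if_pos (mem_range.1 hj)
  | succ r hir ih =>
    rw [sum_range_succ, ih, sum_range_succ, add_assoc]
    simp [insertAt, show ¬ r + 1 < i by omega, show r + 1 ≠ i by omega]

theorem nestLe_iff_of_support {f g : MvPolynomial ℕ ℤ} {x y x' y' : ℕ}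
    (hfg : ∀ m ∈ f.support, ∃ n ∈ g.support, n x' = m x ∧ n y' = m y)
    (hgf : ∀ n ∈ g.support, ∃ m ∈ f.support, n x' = m x ∧ n y' = m y) :
    NestLe g x' y' ↔ NestLe f x y := by
  constructor
  · intro h m hm hmx
    obtain ⟨n, hn, hnx, hny⟩ := hfg m hm
    exact hny ▸ h n hn (hnx ▸ hmx)
  · intro h n hn hnx
    obtain ⟨m, hm, hmx, hmy⟩ := hgf n hn
    exact hmy ▸ h m hm (hmx ▸ hnx)

theorem IsMinVar.of_nestLe_iff {r s i : ℕ} {f g : MvPolynomial ℕ ℤ} {e : ℕ → ℕ}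
    (he : ∀ x < s, e x < r) (hnest : ∀ x < s, ∀ y < s, NestLe g x y ↔ NestLe f (e x) (e y))
    (hi : i < s) (hmin : IsMinVar r f (e i)) : IsMinVar s g i :=
  ⟨hi, fun j hj hji =>
    (hnest i hi j hj).2 (hmin.2 _ (he j hj) ((hnest j hj i hi).1 hji))⟩

section DisjointProduct

variable {p q : MvPolynomial ℕ ℤ} {t : ℕ}

theorem apply_eq_zero_of_vars_lt (hp : ∀ j ∈ p.vars, j < t) {m : ℕ →₀ ℕ} (hm : m ∈ p.support)
    {j : ℕ} (hj : t ≤ j) : m j = 0 := by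
  by_contra h
  have := hp j ((mem_vars_iff_mem_support j).2 ⟨m, hm, Finsupp.mem_support_iff.2 h⟩)
  omega

theorem mapDomain_add_right_apply (t : ℕ) (b : ℕ →₀ ℕ) (j : ℕ) :
    b.mapDomain (· + t) (j + t) = b j :=
  Finsupp.mapDomain_apply (add_left_injective t) b j

theorem mapDomain_add_right_apply_of_lt (b : ℕ →₀ ℕ) {j : ℕ} (hj : j < t) :
    b.mapDomain (· + t) j = 0 :=
  Finsupp.mapDomain_of_notMem_range _ _ (by rintro ⟨x, hx⟩; simp only at hx; omega)

theorem coeff_add_mapDomain_mul_rename (hp : ∀ j ∈ p.vars, j < t) {a : ℕ →₀ ℕ}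
    (ha : ∀ j, t ≤ j → a j = 0) (b : ℕ →₀ ℕ) :
    coeff (a + b.mapDomain (· + t)) (p * rename (· + t) q) = coeff a p * coeff b q := by
  classical
  rw [coeff_mul, Finset.sum_eq_single (a, b.mapDomain (· + t)), coeff_rename_mapDomain _
    (add_left_injective t)]
  · rintro ⟨x, y⟩ hxy hne
    by_contra H
    obtain ⟨hx, hy⟩ := mul_ne_zero_iff.1 H
    obtain ⟨b', rfl, -⟩ := coeff_rename_ne_zero _ _ _ hy
    rw [HasAntidiagonal.mem_antidiagonal] at hxy
    dsimp only at hx hxy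
    have hxa : x = a := by
      ext j
      have hj := congrArg (· j) hxy
      simp only [Finsupp.add_apply] at hj
      by_cases hjt : j < t
      · simpa [mapDomain_add_right_apply_of_lt _ hjt] using hj
      · rw [apply_eq_zero_of_vars_lt hp (mem_support_iff.2 hx) (not_lt.1 hjt),
          ha j (not_lt.1 hjt)]
    subst hxa
    rw [add_left_cancel hxy] at hne
    exact hne rfl
  · intro h
    simp at h

theorem mem_support_mul_rename_iff (hp : ∀ j ∈ p.vars, j < t) (m : ℕ →₀ ℕ) :
    m ∈ (p * rename (· + t) q).support ↔
      ∃ a ∈ p.support, ∃ b ∈ q.support, m = a + b.mapDomain (· + t) := by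
  classical
  constructor
  · intro hm
    obtain ⟨a, ha, y, hy, rfl⟩ := Finset.mem_add.1 (support_mul _ _ hm)
    rw [support_rename_of_injective (add_left_injective t), Finset.mem_image] at hy
    obtain ⟨b, hb, rfl⟩ := hy
    exact ⟨a, ha, b, hb, rfl⟩
  · rintro ⟨a, ha, b, hb, rfl⟩
    rw [mem_support_iff, coeff_add_mapDomain_mul_rename hp
      (fun j hj => apply_eq_zero_of_vars_lt hp ha hj)]
    exact mul_ne_zero (mem_support_iff.1 ha) (mem_support_iff.1 hb)

theorem nestLe_mul_rename_iff_left (hp : ∀ j ∈ p.vars, j < t) (hq : constantCoeff q ≠ 0)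
    {x y : ℕ} (hx : x < t) (hy : y < t) :
    NestLe (p * rename (· + t) q) x y ↔ NestLe p x y := by
  refine nestLe_iff_of_support (fun a ha => ⟨a, ?_, rfl, rfl⟩) fun n hn => ?_
  · simpa using (mem_support_mul_rename_iff hp a).2
      ⟨a, ha, 0, by rwa [mem_support_iff, ← constantCoeff_eq], by simp⟩
  · obtain ⟨a, ha, b, -, rfl⟩ := (mem_support_mul_rename_iff hp n).1 hn
    exact ⟨a, ha, by
      simp [mapDomain_add_right_apply_of_lt _ hx, mapDomain_add_right_apply_of_lt _ hy]⟩

theorem nestLe_mul_rename_iff_right (hp : ∀ j ∈ p.vars, j < t) (hp0 : constantCoeff p ≠ 0)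
    (x y : ℕ) : NestLe (p * rename (· + t) q) (x + t) (y + t) ↔ NestLe q x y := by
  refine nestLe_iff_of_support (fun b hb => ⟨b.mapDomain (· + t), ?_, ?_⟩) fun n hn => ?_
  · simpa using (mem_support_mul_rename_iff hp _).2
      ⟨0, by rwa [mem_support_iff, ← constantCoeff_eq], b, hb, by simp⟩
  · simp [mapDomain_add_right_apply]
  · obtain ⟨a, ha, b, hb, rfl⟩ := (mem_support_mul_rename_iff hp n).1 hn
    refine ⟨b, hb, ?_⟩
    simp [mapDomain_add_right_apply, apply_eq_zero_of_vars_lt hp ha (Nat.le_add_left t _)]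

theorem IsMinVar.of_mul_rename_left (hp : ∀ j ∈ p.vars, j < t) (hq : constantCoeff q ≠ 0)
    {s i : ℕ} (h : IsMinVar (t + s) (p * rename (· + t) q) i) (hi : i < t) : IsMinVar t p i :=
  IsMinVar.of_nestLe_iff (e := id) (fun _ hx => Nat.lt_add_right s hx)
    (fun _ hx _ hy => (nestLe_mul_rename_iff_left hp hq hx hy).symm) hi h

theorem IsMinVar.of_mul_rename_right (hp : ∀ j ∈ p.vars, j < t) (hp0 : constantCoeff p ≠ 0)
    {s i : ℕ} (h : IsMinVar (t + s) (p * rename (· + t) q) i) (hi : t ≤ i) :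
    IsMinVar s q (i - t) :=
  IsMinVar.of_nestLe_iff (e := (· + t)) (fun x hx => show x + t < t + s by omega)
    (fun x _ y _ => (nestLe_mul_rename_iff_right hp hp0 x y).symm) (by have := h.1; omega)
    (by simpa [Nat.sub_add_cancel hi] using h)

end DisjointProduct

section Step

variable {g : MvPolynomial ℕ ℤ} {c : ℤ} {r : ℕ}

theorem coeff_mul_X_add_C_add_single (m : ℕ →₀ ℕ) :
    coeff (m + Finsupp.single r 1) (g * X r + C c) = coeff m g := by
  rw [coeff_add, coeff_mul_X, coeff_C, if_neg, add_zero]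
  intro h
  simpa using congrArg (· r) h

theorem mem_support_mul_X_add_C {n : ℕ →₀ ℕ} (hn : n ∈ (g * X r + C c).support) (hn0 : n ≠ 0) :
    n r ≠ 0 ∧ n - Finsupp.single r 1 ∈ g.support := by
  classical
  rw [mem_support_iff, coeff_add, coeff_C, if_neg (Ne.symm hn0), add_zero, coeff_mul_X'] at hn
  split_ifs at hn with hr
  · exact ⟨Finsupp.mem_support_iff.1 hr, mem_support_iff.2 hn⟩
  · exact absurd rfl hn

theorem nestLe_mul_X_add_C_iff (hg : constantCoeff g ≠ 0) {x y : ℕ} (hx : x ≠ r) (hy : y ≠ r) :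
    NestLe (g * X r + C c) x y ↔ NestLe g x y := by
  refine nestLe_iff_of_support (fun m hm => ⟨m + Finsupp.single r 1, ?_, ?_⟩) fun n hn => ?_
  · rwa [mem_support_iff, coeff_mul_X_add_C_add_single, ← mem_support_iff]
  · simp [hx.symm, hy.symm]
  · refine ⟨n - Finsupp.single r 1, ?_, by simp [hx.symm, hy.symm]⟩
    rcases eq_or_ne n 0 with rfl | hn0
    · rwa [zero_tsub, mem_support_iff, ← constantCoeff_eq]
    · exact (mem_support_mul_X_add_C hn hn0).2

theorem IsMinVar.of_mul_X_add_C (hg : constantCoeff g ≠ 0) {i : ℕ}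
    (h : IsMinVar (r + 1) (g * X r + C c) i) (hi : i < r) : IsMinVar r g i :=
  IsMinVar.of_nestLe_iff (e := id) (fun _ hx => Nat.lt_succ_of_lt hx)
    (fun _ hx _ hy => (nestLe_mul_X_add_C_iff hg hx.ne hy.ne).symm) hi h

/-- Every nonconstant monomial of `g * X r + C c` contains `x_r`, while `x_r` itself is one of
them; so `x_r` can only be minimal when it is the only variable. -/
theorem IsMinVar.eq_zero_of_mul_X_add_C (hg : constantCoeff g ≠ 0)
    (h : IsMinVar (r + 1) (g * X r + C c) r) : r = 0 := by
  by_contra hr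
  have hle : NestLe (g * X r + C c) 0 r := fun n hn hn0 =>
    (mem_support_mul_X_add_C hn (by rintro rfl; exact hn0 rfl)).1
  have hxr : Finsupp.single r 1 ∈ (g * X r + C c).support := by
    rw [mem_support_iff, ← zero_add (Finsupp.single r 1), coeff_mul_X_add_C_add_single,
      ← constantCoeff_eq]
    exact hg
  exact h.2 0 (by omega) hle _ hxr (by simp) (by simp [Ne.symm hr])

end Step

theorem sum_single_one_apply (r j : ℕ) :
    (∑ i ∈ range r, Finsupp.single i 1 : ℕ →₀ ℕ) j = if j < r then 1 else 0 := by
  simp [Finsupp.finsetSum_apply, Finsupp.single_apply]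

theorem leadCoeff_mul_rename {p : MvPolynomial ℕ ℤ} {t : ℕ} (hp : ∀ j ∈ p.vars, j < t)
    (q : MvPolynomial ℕ ℤ) (s : ℕ) :
    leadCoeff (t + s) (p * rename (· + t) q) = leadCoeff t p * leadCoeff s q := by
  have hsplit : (∑ i ∈ range (t + s), Finsupp.single i 1 : ℕ →₀ ℕ) =
      ∑ i ∈ range t, Finsupp.single i 1 +
        (∑ i ∈ range s, Finsupp.single i 1 : ℕ →₀ ℕ).mapDomain (· + t) := by
    ext j
    rw [Finsupp.add_apply, sum_single_one_apply, sum_single_one_apply]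
    rcases lt_or_ge j t with hj | hj
    · rw [mapDomain_add_right_apply_of_lt _ hj, if_pos hj, if_pos (by omega)]
    · obtain ⟨j, rfl⟩ := Nat.exists_eq_add_of_le' hj
      rw [mapDomain_add_right_apply, sum_single_one_apply]
      simp only [show ¬ j + t < t by omega, if_false, zero_add]
      split_ifs <;> omega
  rw [leadCoeff, hsplit, coeff_add_mapDomain_mul_rename hp]
  · rfl
  · intro j hj
    rw [sum_single_one_apply, if_neg (by omega)]

theorem leadCoeff_C (a : ℤ) : leadCoeff 0 (C a) = a := by
  rw [leadCoeff, range_zero, sum_empty, coeff_C, if_pos rfl]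

theorem leadCoeff_mul_X_add_C (g : MvPolynomial ℕ ℤ) (c : ℤ) (r : ℕ) :
    leadCoeff (r + 1) (g * X r + C c) = leadCoeff r g := by
  rw [leadCoeff, sum_range_succ, coeff_mul_X_add_C_add_single, leadCoeff]

theorem LDP.vars_lt {r : ℕ} {f : MvPolynomial ℕ ℤ} {C : ℕ} (h : LDP r f C) :
    ∀ j ∈ f.vars, j < r := by
  classical
  induction h with
  | const k =>
    intro j hj
    rw [vars_C] at hj
    exact absurd hj (Finset.notMem_empty j)
  | mul _ _ ih₁ ih₂ =>
    intro j hj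
    rcases Finset.mem_union.1 (vars_mul _ _ hj) with hj | hj
    · exact (ih₁ j hj).trans_le (Nat.le_add_right _ _)
    · obtain ⟨j, hj', rfl⟩ := Finset.mem_image.1 (vars_rename _ _ hj)
      have := ih₂ j hj'
      omega
  | step c D hc _ _ ih =>
    intro j hj
    rcases Finset.mem_union.1 (vars_add_subset _ _ hj) with hj | hj
    · rcases Finset.mem_union.1 (vars_mul _ _ hj) with hj | hj
      · exact (ih j hj).trans (Nat.lt_succ_self _)
      · rw [vars_X, Finset.mem_singleton] at hj
        omega
    · rw [vars_C] at hj
      exact absurd hj (Finset.notMem_empty j)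

theorem LDP.constantCoeff_pos {r : ℕ} {f : MvPolynomial ℕ ℤ} {C : ℕ} (h : LDP r f C) :
    0 < constantCoeff f := by
  induction h with
  | const k C hk => simpa using hk
  | mul _ _ ih₁ ih₂ => simpa using mul_pos ih₁ ih₂
  | step c D hc => simpa using hc

theorem LDP.coeff_nonneg_s6 {r : ℕ} {f : MvPolynomial ℕ ℤ} {C : ℕ} (h : LDP r f C) (m : ℕ →₀ ℕ) :
    0 ≤ coeff m f := by
  classical
  induction h generalizing m with
  | const k C =>
    rw [coeff_C]
    split_ifs <;> positivity
  | @mul r₁ _ _ f₂ _ _ _ _ ih₁ ih₂ =>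
    rw [coeff_mul]
    refine Finset.sum_nonneg fun x _ => mul_nonneg (ih₁ _) ?_
    by_cases hx : coeff x.2 (rename (· + r₁) f₂) = 0
    · exact hx.ge
    · obtain ⟨u, hu, -⟩ := coeff_rename_ne_zero _ _ _ hx
      rw [← hu, coeff_rename_mapDomain _ (add_left_injective _)]
      exact ih₂ u
  | step c D hc _ _ ih =>
    rw [coeff_add, coeff_mul_X', coeff_C]
    refine add_nonneg ?_ ?_ <;> split_ifs
    exacts [ih _, le_rfl, by positivity, le_rfl]

theorem LDP.leadCoeff_pos_s6 {r : ℕ} {f : MvPolynomial ℕ ℤ} {C : ℕ} (h : LDP r f C) :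
    0 < leadCoeff r f := by
  induction h with
  | const k C hk =>
    rw [leadCoeff_C]
    exact_mod_cast hk
  | mul h₁ _ ih₁ ih₂ => simpa [leadCoeff_mul_rename h₁.vars_lt] using mul_pos ih₁ ih₂
  | step => rwa [leadCoeff_mul_X_add_C]

theorem LDP.exists_eq_C {r : ℕ} {f : MvPolynomial ℕ ℤ} {C : ℕ} (h : LDP r f C) (hr : r = 0) :
    ∃ a : ℕ, 0 < a ∧ f = MvPolynomial.C (a : ℤ) ∧ cpx a ≤ C := by
  induction h with
  | const k C hk hC => exact ⟨k, hk, rfl, hC⟩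
  | mul _ _ ih₁ ih₂ =>
    obtain ⟨a₁, ha₁, rfl, hC₁⟩ := ih₁ (by omega)
    obtain ⟨a₂, ha₂, rfl, hC₂⟩ := ih₂ (by omega)
    refine ⟨a₁ * a₂, by positivity, by simp, ?_⟩
    have := cpx_mul_le ha₁ ha₂
    omega
  | step => omega

theorem truncAt_eq_aeval (f : MvPolynomial ℕ ℤ) (i k : ℕ) :
    truncAt f i k = aeval (insertAt i (C (3 ^ k)) X) f := rfl

theorem skipEmb_injective (i : ℕ) : Function.Injective (skipEmb i) := by
  intro a b h
  simp only [skipEmb] at h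
  split_ifs at h <;> omega

noncomputable def deleteVar (i : ℕ) (m : ℕ →₀ ℕ) : ℕ →₀ ℕ :=
  m.comapDomain (skipEmb i) (skipEmb_injective i).injOn

@[simp]
theorem deleteVar_apply (i : ℕ) (m : ℕ →₀ ℕ) (j : ℕ) : deleteVar i m j = m (skipEmb i j) := rfl

theorem deleteVar_add (i : ℕ) (m n : ℕ →₀ ℕ) :
    deleteVar i (m + n) = deleteVar i m + deleteVar i n := by
  ext j
  simp

theorem deleteVar_single_of_ne {i a : ℕ} (h : a ≠ i) (n : ℕ) :
    deleteVar i (Finsupp.single a n) = Finsupp.single (if a < i then a else a - 1) n := by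
  ext j
  simp only [deleteVar_apply, Finsupp.single_apply, skipEmb]
  split_ifs <;> omega

theorem deleteVar_single_self (i n : ℕ) : deleteVar i (Finsupp.single i n) = 0 := by
  ext j
  simp only [deleteVar_apply, Finsupp.single_apply, skipEmb, Finsupp.coe_zero, Pi.zero_apply]
  split_ifs <;> omega

theorem aeval_insertAt_monomial (i k : ℕ) (m : ℕ →₀ ℕ) (c : ℤ) :
    aeval (insertAt i (C (3 ^ k)) X) (monomial m c) =
      monomial (deleteVar i m) (c * 3 ^ (k * m i)) := by
  induction m using Finsupp.induction generalizing c with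
  | zero =>
    have : deleteVar i 0 = 0 := by ext; simp
    simp [this]
  | single_add a n m _ _ ih =>
    rw [← one_mul c, ← monomial_mul, ← X_pow_eq_monomial, one_mul, map_mul, map_pow, aeval_X, ih,
      deleteVar_add, Finsupp.add_apply]
    by_cases h : a = i
    · subst h
      rw [insertAt, if_neg (lt_irrefl a), if_pos rfl, ← map_pow, C_mul_monomial,
        deleteVar_single_self, zero_add, Finsupp.single_eq_same, mul_add, pow_add, pow_mul]
      ring_nf
    · have hX : (insertAt i (C (3 ^ k)) X a : MvPolynomial ℕ ℤ) =
          X (if a < i then a else a - 1) := by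
        simp only [insertAt, h, if_false]
        split_ifs <;> rfl
      rw [hX, deleteVar_single_of_ne h, Finsupp.single_eq_of_ne (Ne.symm h), zero_add,
        X_pow_eq_monomial, monomial_mul, one_mul]

theorem truncAt_eq_sum (f : MvPolynomial ℕ ℤ) (i k : ℕ) :
    truncAt f i k =
      ∑ m ∈ f.support, monomial (deleteVar i m) (coeff m f * 3 ^ (k * m i)) := by
  conv_lhs => rw [truncAt_eq_aeval, f.as_sum, map_sum]
  simp only [aeval_insertAt_monomial]

/-- Nonnegativity rules out cancellation among the monomials of `f` with the same image. -/
theorem mem_support_truncAt_iff {f : MvPolynomial ℕ ℤ} (hf : ∀ m, 0 ≤ coeff m f) (i k : ℕ)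
    (n : ℕ →₀ ℕ) : n ∈ (truncAt f i k).support ↔ ∃ m ∈ f.support, deleteVar i m = n := by
  classical
  have hterm : ∀ m, 0 ≤ if deleteVar i m = n then coeff m f * 3 ^ (k * m i) else 0 := fun m => by
    split_ifs
    exacts [mul_nonneg (hf m) (by positivity), le_rfl]
  rw [truncAt_eq_sum, mem_support_iff, coeff_sum]
  simp only [coeff_monomial]
  rw [Ne, Finset.sum_eq_zero_iff_of_nonneg fun m _ => hterm m]
  push Not
  refine exists_congr fun m => and_congr_right fun hm => ?_
  rw [ne_eq, ite_eq_right_iff, Classical.not_imp, and_iff_left_iff_imp]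
  exact fun _ => mul_ne_zero (mem_support_iff.1 hm) (by positivity)

theorem nestLe_truncAt_iff {f : MvPolynomial ℕ ℤ} (hf : ∀ m, 0 ≤ coeff m f) (i k j j' : ℕ) :
    NestLe (truncAt f i k) j j' ↔ NestLe f (skipEmb i j) (skipEmb i j') := by
  refine nestLe_iff_of_support
    (fun m hm => ⟨deleteVar i m, (mem_support_truncAt_iff hf i k _).2 ⟨m, hm, rfl⟩, rfl, rfl⟩)
    fun n hn => ?_
  obtain ⟨m, hm, rfl⟩ := (mem_support_truncAt_iff hf i k n).1 hn
  exact ⟨m, hm, rfl, rfl⟩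

theorem eval_truncAt (v : ℕ → ℤ) (f : MvPolynomial ℕ ℤ) (i k : ℕ) :
    eval v (truncAt f i k) = eval (insertAt i (3 ^ k) v) f := by
  change eval₂Hom (RingHom.id ℤ) v (bind₁ _ f) = _
  rw [eval₂Hom_bind₁]
  show eval _ f = eval _ f
  congr 2
  funext j
  simp only [insertAt]
  split_ifs <;> simp

theorem eval3_truncAt (f : MvPolynomial ℕ ℤ) {i r : ℕ} (hi : i ≤ r) (k : ℕ) (kk : ℕ → ℕ) :
    eval3 r (truncAt f i k) kk = eval3 (r + 1) f (insertAt i k kk) := by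
  rw [eval3, eval3, eval_truncAt]
  congr 2
  funext j
  simp only [insertAt]
  split_ifs <;> first | rfl | omega

theorem dftF_truncAt (f : MvPolynomial ℕ ℤ) (C : ℕ) {i r : ℕ} (hi : i ≤ r) (k : ℕ)
    (kk : ℕ → ℕ) : dftF r (truncAt f i k) (C + 3 * k) kk = dftF (r + 1) f C (insertAt i k kk) := by
  have hsum :
      ∑ j ∈ range (r + 1), ((insertAt i k kk j : ℕ) : ℝ) = k + ∑ j ∈ range r, (kk j : ℝ) := by
    rw [← sum_range_insertAt hi (k : ℝ) (fun j => (kk j : ℝ))]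
    exact sum_congr rfl fun j _ => congrFun (comp_insertAt (Nat.cast : ℕ → ℝ) i k kk) j
  rw [dftF, dftF, eval3_truncAt f hi, hsum]
  push_cast
  ring

theorem aeval_eq_self_of_vars {σ R : Type*} [CommSemiring R] {p : MvPolynomial σ R}
    {ψ : σ → MvPolynomial σ R} (h : ∀ j ∈ p.vars, ψ j = X j) : aeval ψ p = p := by
  conv_rhs => rw [← aeval_X_left_apply p]
  exact eval₂Hom_congr' rfl (fun j hj _ => h j hj) rfl

theorem truncAt_mul_rename_of_lt (p q : MvPolynomial ℕ ℤ) {t i : ℕ} (hi : i < t) (k : ℕ) :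
    truncAt (p * rename (· + t) q) i k = truncAt p i k * rename (· + (t - 1)) q := by
  rw [truncAt_eq_aeval, map_mul, aeval_rename, ← truncAt_eq_aeval, rename_eq_aeval]
  congr 3
  funext j
  simp only [Function.comp_apply, insertAt, show ¬ j + t < i by omega,
    show j + t ≠ i by omega, if_false]
  congr 1
  omega

theorem truncAt_mul_rename_of_le {p : MvPolynomial ℕ ℤ} {t i : ℕ} (hp : ∀ j ∈ p.vars, j < t)
    (q : MvPolynomial ℕ ℤ) (hi : t ≤ i) (k : ℕ) :
    truncAt (p * rename (· + t) q) i k = p * rename (· + t) (truncAt q (i - t) k) := by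
  rw [truncAt_eq_aeval, map_mul, aeval_rename, truncAt_eq_aeval, comp_aeval_apply]
  congr 1
  · refine aeval_eq_self_of_vars fun j hj => ?_
    have := hp j hj
    simp only [insertAt, show j < i by omega, if_true]
  · congr 2
    funext j
    simp only [Function.comp_apply, insertAt]
    split_ifs <;> simp only [rename_X, rename_C, X_inj] <;> omega

theorem truncAt_mul_X_add_C (g : MvPolynomial ℕ ℤ) (c : ℤ) {r i : ℕ} (hi : i < r) (k : ℕ) :
    truncAt (g * X r + C c) i k = truncAt g i k * X (r - 1) + C c := by
  rw [truncAt_eq_aeval, map_add, map_mul, aeval_X, aeval_C, algebraMap_eq, ← truncAt_eq_aeval]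
  simp only [insertAt, show ¬ r < i by omega, show r ≠ i by omega, if_false]

theorem truncAt_C_mul_X_add_C (a c : ℤ) (k : ℕ) :
    truncAt (C a * X 0 + C c) 0 k = C (a * 3 ^ k + c) := by
  rw [truncAt_eq_aeval]
  simp [insertAt]

/-- Conclusions (1) and (2) of the theorem, in the form carried through the induction on `LDP`. -/
def LowDefectTrunc (r : ℕ) (f : MvPolynomial ℕ ℤ) (C i k : ℕ) : Prop :=
  LDP (r - 1) (truncAt f i k) (C + 3 * k) ∧
    leadCoeff r f * 3 ^ k < leadCoeff (r - 1) (truncAt f i k)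

theorem LowDefectTrunc.mul_rename_left {p q : MvPolynomial ℕ ℤ} {t s Cp Cq i k : ℕ}
    (hp : LDP t p Cp) (hq : LDP s q Cq) (hi : i < t) (h : LowDefectTrunc t p Cp i k) :
    LowDefectTrunc (t + s) (p * rename (· + t) q) (Cp + Cq) i k := by
  obtain ⟨hL, hlt⟩ := h
  rw [LowDefectTrunc, truncAt_mul_rename_of_lt p q hi k, show t + s - 1 = t - 1 + s by omega,
    leadCoeff_mul_rename hL.vars_lt, leadCoeff_mul_rename hp.vars_lt,
    show Cp + Cq + 3 * k = Cp + 3 * k + Cq by ring, mul_right_comm]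
  exact ⟨hL.mul hq, mul_lt_mul_of_pos_right hlt hq.leadCoeff_pos_s6⟩

theorem LowDefectTrunc.mul_rename_right {p q : MvPolynomial ℕ ℤ} {t s Cp Cq i k : ℕ}
    (hp : LDP t p Cp) (hi : t ≤ i) (hs : 0 < s) (h : LowDefectTrunc s q Cq (i - t) k) :
    LowDefectTrunc (t + s) (p * rename (· + t) q) (Cp + Cq) i k := by
  obtain ⟨hL, hlt⟩ := h
  rw [LowDefectTrunc, truncAt_mul_rename_of_le hp.vars_lt q hi k,
    show t + s - 1 = t + (s - 1) by omega, leadCoeff_mul_rename hp.vars_lt,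
    leadCoeff_mul_rename hp.vars_lt, show Cp + Cq + 3 * k = Cp + (Cq + 3 * k) by ring, mul_assoc]
  exact ⟨hp.mul hL, mul_lt_mul_of_pos_left hlt hp.leadCoeff_pos_s6⟩

theorem LowDefectTrunc.mul_X_add_C {g : MvPolynomial ℕ ℤ} {r Cg c D i k : ℕ} (hc : 0 < c)
    (hD : cpx c ≤ D) (hi : i < r) (h : LowDefectTrunc r g Cg i k) :
    LowDefectTrunc (r + 1) (g * X r + C (c : ℤ)) (Cg + D) i k := by
  obtain ⟨r, rfl⟩ : ∃ r', r = r' + 1 := ⟨r - 1, by omega⟩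
  obtain ⟨hL, hlt⟩ := h
  rw [Nat.add_sub_cancel] at hL hlt
  rw [LowDefectTrunc, truncAt_mul_X_add_C g c hi k, Nat.add_sub_cancel, Nat.add_sub_cancel,
    leadCoeff_mul_X_add_C, leadCoeff_mul_X_add_C, show Cg + D + 3 * k = Cg + 3 * k + D by ring]
  exact ⟨hL.step c D hc hD, hlt⟩

theorem lowDefectTrunc_C_mul_X_add_C {a c Ca Cc : ℕ} (ha : 0 < a) (hc : 0 < c) (hCa : cpx a ≤ Ca)
    (hCc : cpx c ≤ Cc) (k : ℕ) :
    LowDefectTrunc 1 (C (a : ℤ) * X 0 + C (c : ℤ)) (Ca + Cc) 0 k := by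
  have hcpx : cpx (a * 3 ^ k + c) ≤ Ca + Cc + 3 * k := by
    have := cpx_add_le (a := a * 3 ^ k) (by positivity) hc
    have := cpx_mul_pow_three_le ha k
    omega
  have hlead : leadCoeff 1 (C (a : ℤ) * X 0 + C (c : ℤ)) = a :=
    (leadCoeff_mul_X_add_C _ _ 0).trans (leadCoeff_C _)
  rw [LowDefectTrunc, truncAt_C_mul_X_add_C, Nat.sub_self, leadCoeff_C, hlead]
  exact ⟨by exact_mod_cast LDP.const _ _ (by positivity) hcpx,
    lt_add_of_pos_right _ (by exact_mod_cast hc)⟩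

theorem LDP.lowDefectTrunc {r : ℕ} {f : MvPolynomial ℕ ℤ} {C : ℕ} (h : LDP r f C) {i : ℕ}
    (hi : IsMinVar r f i) (k : ℕ) : LowDefectTrunc r f C i k := by
  induction h generalizing i with
  | const => exact absurd hi.1 (Nat.not_lt_zero i)
  | @mul t s p q _ _ hp hq ihp ihq =>
    rcases lt_or_ge i t with hit | hit
    · exact .mul_rename_left hp hq hit
        (ihp (hi.of_mul_rename_left hp.vars_lt hq.constantCoeff_pos.ne' hit))
    · have hmin := hi.of_mul_rename_right hp.vars_lt hp.constantCoeff_pos.ne' hit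
      exact .mul_rename_right hp hit (by have := hmin.1; omega) (ihq hmin)
  | @step r g _ c D hc hD hg ih =>
    have hg0 := hg.constantCoeff_pos.ne'
    rcases (Nat.lt_succ_iff.1 hi.1).lt_or_eq with hir | rfl
    · exact .mul_X_add_C hc hD hir (ih (hi.of_mul_X_add_C hg0 hir))
    · obtain rfl := hi.eq_zero_of_mul_X_add_C hg0
      obtain ⟨a, ha, rfl, hCa⟩ := hg.exists_eq_C rfl
      exact lowDefectTrunc_C_mul_X_add_C ha hc hCa hD k

theorem pairDft_lt_of_leadCoeff_lt {r r' : ℕ} {f g : MvPolynomial ℕ ℤ} {C k : ℕ}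
    (hf : 0 < leadCoeff r f) (h : leadCoeff r f * 3 ^ k < leadCoeff r' g) :
    pairDft r' g (C + 3 * k) < pairDft r f C := by
  have hf' : (0 : ℝ) < leadCoeff r f := by exact_mod_cast hf
  have hlog : Real.logb 3 (leadCoeff r f) + k < Real.logb 3 (leadCoeff r' g) := by
    have h' : (leadCoeff r f : ℝ) * 3 ^ k < leadCoeff r' g := by exact_mod_cast h
    have := Real.logb_lt_logb (by norm_num : (1 : ℝ) < 3) (by positivity) h'
    rwa [Real.logb_mul hf'.ne' (by positivity), Real.logb_pow, Real.logb_self_eq_one (by norm_num),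
      mul_one] at this
  simp only [pairDft]
  push_cast
  linarith

/-- Direct truncation. Substituting `3^k` into a minimal
variable of a low-defect pair gives a low-defect pair, with bigger leading
coefficient, smaller defect, restricted nesting order, and matching `δ_{f,C}`. -/
theorem direct_truncation (r : ℕ) (f : MvPolynomial ℕ ℤ) (C : ℕ) (hf : LDP (r + 1) f C)
    (i : ℕ) (hi : IsMinVar (r + 1) f i) (k : ℕ) :
    LDP r (truncAt f i k) (C + 3 * k) ∧
    leadCoeff (r + 1) f * 3 ^ k < leadCoeff r (truncAt f i k) ∧
    pairDft r (truncAt f i k) (C + 3 * k) < pairDft (r + 1) f C ∧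
    (∀ j j', j < r → j' < r →
      (NestLe (truncAt f i k) j j' ↔ NestLe f (skipEmb i j) (skipEmb i j'))) ∧
    (∀ kk : ℕ → ℕ, dftF r (truncAt f i k) (C + 3 * k) kk =
      dftF (r + 1) f C (fun j => if j < i then kk j else if j = i then k else kk (j - 1))) := by
  obtain ⟨hL, hlt⟩ := hf.lowDefectTrunc hi k
  rw [Nat.add_sub_cancel] at hL hlt
  exact ⟨hL, hlt, pairDft_lt_of_leadCoeff_lt hf.leadCoeff_pos_s6 hlt,
    fun j j' _ _ => nestLe_truncAt_iff hf.coeff_nonneg_s6 i k j j',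
    dftF_truncAt f C (Nat.lt_succ_iff.1 hi.1) k⟩
end

section
/- Let (f,C) be a low-defect pair of degree r, and let p = (k₁,…,k_r) ∈ (ℤ≥0 ∪ {∗})^r be such that the set of variables xᵢ with kᵢ ≠ ∗ is downward closed under the nesting order of f. Let (g,D) denote the 3-substitution of p into (f,C). Then: (1) (g,D) is a truncation of (f,C), hence a low-defect pair; (2) if t is the number of indices i with kᵢ = ∗ and ι : ℤ≥0^t → ℤ≥0^r is the map inserting its arguments into the coordinates of p equal to ∗, then δ_{g,D} = δ_{f,C} ∘ ι. Furthermore, every truncation of (f,C) arises as the 3-substitution of such a tuple p into (f,C). -/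
open MvPolynomial

section MonomialSums

variable {σ τ ι R : Type*} [CommSemiring R]

theorem exists_eq_of_mem_support_sum_monomial {s : Finset ι} {d : ι → σ →₀ ℕ} {c : ι → R}
    {m : σ →₀ ℕ} (hm : m ∈ (∑ i ∈ s, monomial (d i) (c i)).support) : ∃ i ∈ s, d i = m := by
  classical
  obtain ⟨i, hi, hmi⟩ := Finset.mem_biUnion.1 (support_sum hm)
  exact ⟨i, hi, (Finset.mem_singleton.1 (support_monomial_subset hmi)).symm⟩

theorem aeval_eq_sum_monomial {φ : σ → MvPolynomial τ R} {d : σ → τ →₀ ℕ} {a : σ → R}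
    (hφ : ∀ j, φ j = monomial (d j) (a j)) (f : MvPolynomial σ R) :
    aeval φ f = ∑ m ∈ f.support,
      monomial (m.sum fun j e => e • d j) (f.coeff m * m.prod fun j e => a j ^ e) := by
  conv_lhs => rw [f.as_sum, map_sum]
  refine Finset.sum_congr rfl fun m _ => ?_
  simp only [aeval_monomial, hφ, monomial_pow, Finsupp.prod, Finsupp.sum, ← monomial_sum_prod,
    algebraMap_eq, C_mul_monomial]

end MonomialSums

section CoeffNonneg

variable {σ ι R : Type*} [CommSemiring R] [PartialOrder R]

def CoeffNonneg (f : MvPolynomial σ R) : Prop := ∀ m, 0 ≤ f.coeff m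

variable {f g : MvPolynomial σ R}

theorem CoeffNonneg.coeff_pos (hf : CoeffNonneg f) {m : σ →₀ ℕ} (hm : m ∈ f.support) :
    0 < f.coeff m :=
  (hf m).lt_of_ne (mem_support_iff.1 hm).symm

theorem coeffNonneg_C {c : R} (hc : 0 ≤ c) : CoeffNonneg (C c : MvPolynomial σ R) := fun m => by
  classical
  rw [coeff_C]
  split_ifs
  exacts [hc, le_rfl]

theorem CoeffNonneg.rename {τ : Type*} {k : σ → τ} (hk : Function.Injective k)
    (hf : CoeffNonneg f) : CoeffNonneg (MvPolynomial.rename k f) := fun d => by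
  classical
  by_cases hd : d ∈ (MvPolynomial.rename k f).support
  · rw [support_rename_of_injective hk] at hd
    obtain ⟨m, -, rfl⟩ := Finset.mem_image.1 hd
    rw [coeff_rename_mapDomain k hk]
    exact hf m
  · rw [notMem_support_iff.1 hd]

variable [IsOrderedRing R]

theorem coeffNonneg_X (i : σ) : CoeffNonneg (X i : MvPolynomial σ R) := fun m => by
  classical
  rw [coeff_X]
  split_ifs
  exacts [zero_le_one, le_rfl]

theorem CoeffNonneg.add (hf : CoeffNonneg f) (hg : CoeffNonneg g) : CoeffNonneg (f + g) :=
  fun m => by rw [coeff_add]; exact add_nonneg (hf m) (hg m)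

theorem CoeffNonneg.mul (hf : CoeffNonneg f) (hg : CoeffNonneg g) : CoeffNonneg (f * g) :=
  fun m => by
    classical
    rw [coeff_mul]
    exact Finset.sum_nonneg fun x _ => mul_nonneg (hf _) (hg _)

theorem CoeffNonneg.mem_support_add_left (hf : CoeffNonneg f) (hg : CoeffNonneg g)
    {m : σ →₀ ℕ} (hm : m ∈ f.support) : m ∈ (f + g).support := by
  rw [mem_support_iff, coeff_add]
  exact (add_pos_of_pos_of_nonneg (hf.coeff_pos hm) (hg m)).ne'

theorem coeffNonneg_sum_monomial {s : Finset ι} {d : ι → σ →₀ ℕ} {c : ι → R}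
    (hc : ∀ i ∈ s, 0 ≤ c i) : CoeffNonneg (∑ i ∈ s, monomial (d i) (c i)) := fun m => by
  classical
  rw [coeff_sum]
  refine Finset.sum_nonneg fun i hi => ?_
  rw [coeff_monomial]
  split_ifs
  exacts [hc i hi, le_rfl]

theorem mem_support_sum_monomial {s : Finset ι} {d : ι → σ →₀ ℕ} {c : ι → R}
    (hc : ∀ i ∈ s, 0 ≤ c i) {i : ι} (hi : i ∈ s) (hci : 0 < c i) :
    d i ∈ (∑ i ∈ s, monomial (d i) (c i)).support := by
  classical
  have hterm : ∀ j ∈ s, 0 ≤ (monomial (d j) (c j)).coeff (d i) := fun j hj => by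
    rw [coeff_monomial]
    split_ifs
    exacts [hc j hj, le_rfl]
  rw [mem_support_iff, coeff_sum]
  refine (lt_of_lt_of_le ?_ (Finset.single_le_sum hterm hi)).ne'
  rwa [coeff_monomial, if_pos rfl]

end CoeffNonneg

theorem CoeffNonneg.add_mem_support_mul {σ R : Type*} [CommSemiring R] [PartialOrder R]
    [IsStrictOrderedRing R] {f g : MvPolynomial σ R} (hf : CoeffNonneg f) (hg : CoeffNonneg g)
    {m₁ m₂ : σ →₀ ℕ} (hm₁ : m₁ ∈ f.support) (hm₂ : m₂ ∈ g.support) :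
    m₁ + m₂ ∈ (f * g).support := by
  classical
  rw [mem_support_iff, coeff_mul]
  refine (lt_of_lt_of_le (mul_pos (hf.coeff_pos hm₁) (hg.coeff_pos hm₂)) ?_).ne'
  have hmem : (m₁, m₂) ∈ Finset.HasAntidiagonal.antidiagonal (m₁ + m₂) :=
    Finset.HasAntidiagonal.mem_antidiagonal.2 rfl
  exact Finset.single_le_sum (f := fun x => f.coeff x.1 * g.coeff x.2)
    (fun x _ => mul_nonneg (hf _) (hg _)) hmem

section StarCount

variable (p : ℕ → Option ℕ)

theorem starCount_succ (j : ℕ) :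
    starCount (j + 1) p = starCount j p + if p j = none then 1 else 0 := by
  unfold starCount
  rw [Finset.range_add_one, Finset.filter_insert]
  split_ifs
  · exact Finset.card_insert_of_notMem (by simp)
  · rfl

theorem starCount_mono : Monotone (starCount · p) := fun _ _ h =>
  Finset.card_le_card (Finset.filter_subset_filter _ (Finset.range_subset_range.2 h))

variable {p}

theorem starCount_lt_starCount {l j : ℕ} (hl : p l = none) (h : l < j) :
    starCount l p < starCount j p := by
  have : starCount (l + 1) p ≤ starCount j p := starCount_mono p h
  rw [starCount_succ, if_pos hl] at this
  omega

theorem starCount_injOn : Set.InjOn (starCount · p) {j | p j = none} := by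
  intro a ha b hb hab
  rcases lt_trichotomy a b with h | h | h
  · exact absurd hab (starCount_lt_starCount ha h).ne
  · exact h
  · exact absurd hab (starCount_lt_starCount hb h).ne'

theorem exists_starCount_eq {a j : ℕ} (h : a < starCount j p) :
    ∃ l < j, p l = none ∧ starCount l p = a := by
  induction j with
  | zero => exact absurd h (Nat.not_lt_zero a)
  | succ j ih =>
    rw [starCount_succ] at h
    rcases lt_or_ge a (starCount j p) with h' | h'
    · obtain ⟨l, hl, hpl, rfl⟩ := ih h'
      exact ⟨l, by omega, hpl, rfl⟩
    · by_cases hj : p j = none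
      · rw [if_pos hj] at h
        exact ⟨j, by omega, hj, by omega⟩
      · rw [if_neg hj] at h
        omega

theorem starCount_of_forall_eq_none (h : ∀ j, p j = none) (j : ℕ) : starCount j p = j := by
  unfold starCount
  rw [Finset.filter_true_of_mem fun x _ => h x, Finset.card_range]

end StarCount

section Subst3

variable {f : MvPolynomial ℕ ℤ} {p : ℕ → Option ℕ}

noncomputable def subst3Exponent (p : ℕ → Option ℕ) (j : ℕ) : ℕ →₀ ℕ :=
  if p j = none then Finsupp.single (starCount j p) 1 else 0

noncomputable def subst3Var (p : ℕ → Option ℕ) (j : ℕ) : MvPolynomial ℕ ℤ :=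
  monomial (subst3Exponent p j) (3 ^ (p j).getD 0)

theorem subst3Var_of_eq_none {j : ℕ} (h : p j = none) : subst3Var p j = X (starCount j p) := by
  simp [subst3Var, subst3Exponent, h, X]

theorem subst3Var_of_eq_some {j k : ℕ} (h : p j = some k) : subst3Var p j = C (3 ^ k) := by
  simp [subst3Var, subst3Exponent, h]

theorem subst3_eq_aeval (f : MvPolynomial ℕ ℤ) (p : ℕ → Option ℕ) :
    subst3 f p = aeval (subst3Var p) f := by
  refine congrArg (fun φ => aeval φ f) (funext fun j => ?_)
  cases h : p j
  · rw [subst3Var_of_eq_none h]; rfl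
  · rw [subst3Var_of_eq_some h]

noncomputable def subst3Monomial (p : ℕ → Option ℕ) (m : ℕ →₀ ℕ) : ℕ →₀ ℕ :=
  m.sum fun j e => e • subst3Exponent p j

theorem subst3Monomial_apply_starCount (m : ℕ →₀ ℕ) {j : ℕ} (hj : p j = none) :
    subst3Monomial p m (starCount j p) = m j := by
  have hexp : ∀ i, subst3Exponent p i (starCount j p) = if i = j then 1 else 0 := fun i => by
    by_cases hi : p i = none
    · simp only [subst3Exponent, if_pos hi, Finsupp.single_apply]
      exact if_congr ⟨starCount_injOn hi hj, fun h => h ▸ rfl⟩ rfl rfl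
    · have : i ≠ j := fun h => hi (h ▸ hj)
      simp [subst3Exponent, hi, this]
  simp only [subst3Monomial, Finsupp.sum_apply, Finsupp.smul_apply, hexp, smul_eq_mul,
    mul_ite, mul_one, mul_zero]
  rw [Finsupp.sum, Finset.sum_ite_eq']
  split_ifs with h
  · rfl
  · exact (Finsupp.notMem_support_iff.1 h).symm

theorem subst3_eq_sum_monomial (f : MvPolynomial ℕ ℤ) (p : ℕ → Option ℕ) :
    subst3 f p = ∑ m ∈ f.support, monomial (subst3Monomial p m)
      (f.coeff m * m.prod fun j e => (3 ^ (p j).getD 0) ^ e) := by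
  rw [subst3_eq_aeval]
  exact aeval_eq_sum_monomial (fun _ => rfl) f

theorem exists_subst3Monomial_eq_of_mem_support {m' : ℕ →₀ ℕ}
    (hm' : m' ∈ (subst3 f p).support) : ∃ m ∈ f.support, subst3Monomial p m = m' := by
  rw [subst3_eq_sum_monomial] at hm'
  exact exists_eq_of_mem_support_sum_monomial hm'

theorem coeffNonneg_subst3 (hf : CoeffNonneg f) (p : ℕ → Option ℕ) :
    CoeffNonneg (subst3 f p) := by
  rw [subst3_eq_sum_monomial]
  exact coeffNonneg_sum_monomial fun m _ =>
    mul_nonneg (hf m) (Finset.prod_nonneg fun _ _ => by positivity)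

theorem CoeffNonneg.subst3Monomial_mem_support (hf : CoeffNonneg f) (p : ℕ → Option ℕ)
    {m : ℕ →₀ ℕ} (hm : m ∈ f.support) : subst3Monomial p m ∈ (subst3 f p).support := by
  rw [subst3_eq_sum_monomial]
  exact mem_support_sum_monomial
    (fun m _ => mul_nonneg (hf m) (Finset.prod_nonneg fun _ _ => by positivity)) hm
    (mul_pos (hf.coeff_pos hm) (Finset.prod_pos fun _ _ => by positivity))

end Subst3

theorem NestLe.of_forall_mem_support {f g : MvPolynomial ℕ ℤ} {a b a' b' : ℕ}
    (h : ∀ m' ∈ g.support, ∃ m ∈ f.support, m a = m' a' ∧ m b = m' b') (hab : NestLe f a b) :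
    NestLe g a' b' := by
  intro m' hm' ha'
  obtain ⟨m, hm, hma, hmb⟩ := h m' hm'
  rw [← hmb]
  exact hab m hm (hma ▸ ha')

theorem CoeffNonneg.nestLe_subst3_iff {f : MvPolynomial ℕ ℤ} (hf : CoeffNonneg f)
    {p : ℕ → Option ℕ} {a b : ℕ} (ha : p a = none) (hb : p b = none) :
    NestLe (subst3 f p) (starCount a p) (starCount b p) ↔ NestLe f a b := by
  constructor
  · refine NestLe.of_forall_mem_support fun m hm => ⟨_, hf.subst3Monomial_mem_support p hm, ?_⟩
    rw [subst3Monomial_apply_starCount m ha, subst3Monomial_apply_starCount m hb]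
    exact ⟨rfl, rfl⟩
  · refine NestLe.of_forall_mem_support fun m' hm' => ?_
    obtain ⟨m, hm, rfl⟩ := exists_subst3Monomial_eq_of_mem_support hm'
    rw [subst3Monomial_apply_starCount m ha, subst3Monomial_apply_starCount m hb]
    exact ⟨m, hm, rfl, rfl⟩

section FillStars

def fillStars (p q : ℕ → Option ℕ) (j : ℕ) : Option ℕ :=
  if p j = none then q (starCount j p) else p j

variable {p q : ℕ → Option ℕ} {j : ℕ}

theorem fillStars_of_eq_none (h : p j = none) : fillStars p q j = q (starCount j p) :=
  if_pos h

theorem fillStars_of_eq_some {k : ℕ} (h : p j = some k) : fillStars p q j = some k := by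
  simp [fillStars, h]

theorem starCount_fillStars (p q : ℕ → Option ℕ) (j : ℕ) :
    starCount j (fillStars p q) = starCount (starCount j p) q := by
  induction j with
  | zero => rfl
  | succ j ih =>
    rw [starCount_succ, ih, starCount_succ p]
    cases h : p j
    · rw [fillStars_of_eq_none h, if_pos rfl, starCount_succ]
    · rw [fillStars_of_eq_some h]
      simp

theorem sum_getD_fillStars (p q : ℕ → Option ℕ) (r : ℕ) :
    ∑ j ∈ Finset.range r, (fillStars p q j).getD 0 =
      ∑ j ∈ Finset.range r, (p j).getD 0 + ∑ a ∈ Finset.range (starCount r p), (q a).getD 0 := by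
  induction r with
  | zero => rfl
  | succ r ih =>
    rw [Finset.sum_range_succ, Finset.sum_range_succ, ih, starCount_succ]
    cases h : p r
    · rw [fillStars_of_eq_none h, if_pos rfl, Finset.sum_range_succ, Option.getD_none]
      ring
    · rw [fillStars_of_eq_some h]
      simp only [Option.getD_some, reduceCtorEq, if_false, add_zero]
      ring

theorem bind₁_subst3Var (p q : ℕ → Option ℕ) (j : ℕ) :
    bind₁ (subst3Var q) (subst3Var p j) = subst3Var (fillStars p q) j := by
  cases h : p j
  · rw [subst3Var_of_eq_none h, bind₁_X_right]
    cases h' : q (starCount j p)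
    · rw [subst3Var_of_eq_none h', subst3Var_of_eq_none (by rwa [fillStars_of_eq_none h]),
        starCount_fillStars]
    · rw [subst3Var_of_eq_some h', subst3Var_of_eq_some (by rwa [fillStars_of_eq_none h])]
  · rw [subst3Var_of_eq_some h, subst3Var_of_eq_some (fillStars_of_eq_some h), bind₁_C_right]

theorem subst3_subst3 (f : MvPolynomial ℕ ℤ) (p q : ℕ → Option ℕ) :
    subst3 (subst3 f p) q = subst3 f (fillStars p q) := by
  simp only [subst3_eq_aeval, aeval_eq_bind₁, bind₁_bind₁, bind₁_subst3Var]

end FillStars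

section FixVar

def fixVar (i k : ℕ) (j : ℕ) : Option ℕ := if j = i then some k else none

variable {i k : ℕ}

theorem starCount_fixVar (j : ℕ) : starCount j (fixVar i k) = if j ≤ i then j else j - 1 := by
  induction j with
  | zero => rfl
  | succ j ih =>
    rw [starCount_succ, ih]
    by_cases hj : j = i
    · simp [fixVar, hj]
    · simp only [fixVar, if_neg hj, if_true]
      split_ifs <;> omega

theorem sum_getD_fixVar {n : ℕ} (h : i < n) : ∑ j ∈ Finset.range n, (fixVar i k j).getD 0 = k := by
  simp only [fixVar, apply_ite (Option.getD · 0), Option.getD_some, Option.getD_none]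
  rw [Finset.sum_ite_eq', if_pos (Finset.mem_range.2 h)]

theorem truncAt_eq_subst3 (f : MvPolynomial ℕ ℤ) (i k : ℕ) :
    truncAt f i k = subst3 f (fixVar i k) := by
  rw [truncAt, subst3_eq_aeval]
  refine congrArg (fun φ => aeval φ f) (funext fun j => ?_)
  rcases lt_trichotomy j i with h | rfl | h
  · rw [if_pos h, subst3Var_of_eq_none (if_neg h.ne), starCount_fixVar, if_pos h.le]
  · rw [if_neg (lt_irrefl j), if_pos rfl, subst3Var_of_eq_some (if_pos rfl)]
  · rw [if_neg h.not_gt, if_neg h.ne', subst3Var_of_eq_none (if_neg h.ne'), starCount_fixVar,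
      if_neg h.not_ge]

theorem fillStars_fixVar (q : ℕ → Option ℕ) (j : ℕ) :
    fillStars (fixVar i k) q j = if j = i then some k else q (if j ≤ i then j else j - 1) := by
  by_cases hj : j = i
  · rw [if_pos hj, fillStars_of_eq_some (if_pos hj)]
  · rw [if_neg hj, fillStars_of_eq_none (if_neg hj), starCount_fixVar]

end FixVar

section Defect

theorem iotaMap_eq_getD_fillStars (p : ℕ → Option ℕ) (ℓ : ℕ → ℕ) (j : ℕ) :
    iotaMap p ℓ j = (fillStars p (some ∘ ℓ) j).getD 0 := by
  cases h : p j
  · rw [fillStars_of_eq_none h]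
    simp only [iotaMap, h, Function.comp_apply, Option.getD_some]
    rfl
  · rw [fillStars_of_eq_some h]; simp [iotaMap, h]

variable {r : ℕ} {p : ℕ → Option ℕ}

theorem eval3_subst3 (hp : ∀ j, r ≤ j → p j = none) (f : MvPolynomial ℕ ℤ) (ℓ : ℕ → ℕ) :
    eval3 (starCount r p) (subst3 f p) ℓ = eval3 r f (iotaMap p ℓ) := by
  rw [eval3, eval3, subst3_eq_aeval, aeval_eq_bind₁]
  refine (eval₂Hom_bind₁ (RingHom.id ℤ) _ _ f).trans (congrArg (eval · f) (funext fun j => ?_))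
  cases h : p j with
  | none =>
    have hℓ : iotaMap p ℓ j = ℓ (starCount j p) := by
      simp only [iotaMap, h]
      rfl
    rw [subst3Var_of_eq_none h, eval₂Hom_X', hℓ]
    by_cases hj : j < r
    · rw [if_pos (starCount_lt_starCount h hj), if_pos hj]
    · rw [if_neg (starCount_mono p (not_lt.1 hj)).not_gt, if_neg hj]
  | some k =>
    have hj : j < r := by
      by_contra hj
      simp [hp j (not_lt.1 hj)] at h
    have hℓ : iotaMap p ℓ j = k := by simp [iotaMap, h]
    rw [subst3Var_of_eq_some h, eval₂Hom_C, if_pos hj, hℓ]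
    rfl

theorem sum_iotaMap (p : ℕ → Option ℕ) (r : ℕ) (ℓ : ℕ → ℕ) :
    ∑ j ∈ Finset.range r, iotaMap p ℓ j =
      ∑ j ∈ Finset.range r, (p j).getD 0 + ∑ a ∈ Finset.range (starCount r p), ℓ a := by
  simp only [iotaMap_eq_getD_fillStars, sum_getD_fillStars, Function.comp_apply,
    Option.getD_some]

theorem dftF_subst3 (hp : ∀ j, r ≤ j → p j = none) (f : MvPolynomial ℕ ℤ) (C : ℕ)
    (ℓ : ℕ → ℕ) :
    dftF (starCount r p) (subst3 f p) (C + 3 * ∑ i ∈ Finset.range r, (p i).getD 0) ℓ =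
      dftF r f C (iotaMap p ℓ) := by
  have hsum := congrArg (Nat.cast : ℕ → ℝ) (sum_iotaMap p r ℓ)
  push_cast at hsum
  rw [dftF, dftF, eval3_subst3 hp, hsum]
  push_cast
  ring

end Defect

theorem mapDomain_mem_support_rename {σ τ R : Type*} [CommSemiring R] {k : σ → τ}
    (hk : Function.Injective k) {f : MvPolynomial σ R} {m : σ →₀ ℕ} (hm : m ∈ f.support) :
    m.mapDomain k ∈ (rename k f).support := by
  classical
  rw [support_rename_of_injective hk]
  exact Finset.mem_image_of_mem _ hm

theorem mem_vars_of_mem_support {σ R : Type*} [CommSemiring R] {f : MvPolynomial σ R}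
    {m : σ →₀ ℕ} (hm : m ∈ f.support) {i : σ} (hi : m i ≠ 0) : i ∈ f.vars :=
  (mem_vars_iff_mem_support i).2 ⟨m, hm, Finsupp.mem_support_iff.2 hi⟩

section LowDefectSupport

variable {r r₁ r₂ C C₁ C₂ : ℕ} {f f₁ f₂ : MvPolynomial ℕ ℤ} {m m₁ m₂ : ℕ →₀ ℕ}

theorem LDP.coeffNonneg (h : LDP r f C) : CoeffNonneg f := by
  induction h with
  | const => exact coeffNonneg_C (by positivity)
  | mul _ _ ih₁ ih₂ => exact ih₁.mul (ih₂.rename (add_left_injective _))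
  | step _ _ _ _ _ ih => exact (ih.mul (coeffNonneg_X _)).add (coeffNonneg_C (by positivity))

theorem LDP.add_mapDomain_mem_support_mul (h₁ : LDP r₁ f₁ C₁) (h₂ : LDP r₂ f₂ C₂)
    (hm₁ : m₁ ∈ f₁.support) (hm₂ : m₂ ∈ f₂.support) :
    m₁ + m₂.mapDomain (· + r₁) ∈ (f₁ * rename (· + r₁) f₂).support :=
  h₁.coeffNonneg.add_mem_support_mul (h₂.coeffNonneg.rename (add_left_injective _)) hm₁
    (mapDomain_mem_support_rename (add_left_injective _) hm₂)

theorem LDP.add_single_mem_support_step (h : LDP r f C) (c : ℕ) (hm : m ∈ f.support) :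
    m + Finsupp.single r 1 ∈ (f * X r + MvPolynomial.C (c : ℤ)).support := by
  have hX : CoeffNonneg (X r : MvPolynomial ℕ ℤ) := coeffNonneg_X r
  refine (h.coeffNonneg.mul hX).mem_support_add_left (coeffNonneg_C (by positivity)) ?_
  exact h.coeffNonneg.add_mem_support_mul hX hm
    (by rw [support_X]; exact Finset.mem_singleton_self _)

theorem LDP.zero_mem_support (h : LDP r f C) : (0 : ℕ →₀ ℕ) ∈ f.support := by
  induction h with
  | const _ _ hk _ =>
    rw [mem_support_iff, coeff_C, if_pos rfl]
    exact_mod_cast hk.ne'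
  | mul h₁ h₂ ih₁ ih₂ => simpa using h₁.add_mapDomain_mem_support_mul h₂ ih₁ ih₂
  | step _ _ hc _ h _ =>
    rw [add_comm]
    refine (coeffNonneg_C (by positivity)).mem_support_add_left
      (h.coeffNonneg.mul (coeffNonneg_X _)) ?_
    rw [mem_support_iff, coeff_C, if_pos rfl]
    exact_mod_cast hc.ne'

theorem LDP.vars_subset (h : LDP r f C) : f.vars ⊆ Finset.range r := by
  classical
  induction h with
  | const => simp only [vars_C, Finset.empty_subset]
  | @mul r₁ r₂ _ _ _ _ _ _ ih₁ ih₂ =>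
    refine (vars_mul _ _).trans (Finset.union_subset
      (ih₁.trans (Finset.range_subset_range.2 (Nat.le_add_right _ _))) ((vars_rename _ _).trans ?_))
    intro j hj
    obtain ⟨i, hi, rfl⟩ := Finset.mem_image.1 hj
    have := Finset.mem_range.1 (ih₂ hi)
    exact Finset.mem_range.2 (by omega)
  | step _ _ _ _ _ ih =>
    refine (vars_add_subset _ _).trans (Finset.union_subset ((vars_mul _ _).trans
      (Finset.union_subset (ih.trans (Finset.range_subset_range.2 (Nat.le_succ _))) ?_)) ?_)
    · simp
    · simp only [vars_C, Finset.empty_subset]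

theorem LDP.range_subset_vars (h : LDP r f C) : Finset.range r ⊆ f.vars := by
  induction h with
  | const => simp
  | @mul r₁ r₂ f₁ f₂ _ _ h₁ h₂ ih₁ ih₂ =>
    intro i hi
    rcases lt_or_ge i r₁ with hi₁ | hi₁
    · obtain ⟨m, hm, him⟩ := (mem_vars_iff_mem_support i).1 (ih₁ (Finset.mem_range.2 hi₁))
      refine mem_vars_of_mem_support (h₁.add_mapDomain_mem_support_mul h₂ hm h₂.zero_mem_support) ?_
      simpa using him
    · obtain ⟨i, rfl⟩ := Nat.exists_eq_add_of_le' hi₁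
      have hi₂ : i < r₂ := by have := Finset.mem_range.1 hi; omega
      obtain ⟨m, hm, him⟩ := (mem_vars_iff_mem_support i).1 (ih₂ (Finset.mem_range.2 hi₂))
      refine mem_vars_of_mem_support (h₁.add_mapDomain_mem_support_mul h₂ h₁.zero_mem_support hm) ?_
      simpa [Finsupp.mapDomain_apply (add_left_injective r₁)] using him
  | @step r f _ c _ _ _ h ih =>
    intro i hi
    rcases Nat.lt_succ_iff_lt_or_eq.1 (Finset.mem_range.1 hi) with hi | rfl
    · obtain ⟨m, hm, him⟩ := (mem_vars_iff_mem_support i).1 (ih (Finset.mem_range.2 hi))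
      refine mem_vars_of_mem_support (h.add_single_mem_support_step c hm) ?_
      simpa [Finsupp.single_apply, hi.ne'] using him
    · refine mem_vars_of_mem_support (h.add_single_mem_support_step c h.zero_mem_support) ?_
      simp

theorem LDP.exists_mem_support_apply_ne_zero (h : LDP r f C) {i : ℕ} (hi : i < r) :
    ∃ m ∈ f.support, m i ≠ 0 := by
  obtain ⟨m, hm, him⟩ :=
    (mem_vars_iff_mem_support i).1 (h.range_subset_vars (Finset.mem_range.2 hi))
  exact ⟨m, hm, Finsupp.mem_support_iff.1 him⟩

theorem LDP.apply_eq_zero_of_mem_support (h : LDP r f C) (hm : m ∈ f.support) {i : ℕ}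
    (hi : r ≤ i) : m i = 0 := by
  by_contra hmi
  exact absurd (Finset.mem_range.1 (h.vars_subset (mem_vars_of_mem_support hm hmi))) (not_lt.2 hi)

end LowDefectSupport

def NestLeAntisymm (r : ℕ) (f : MvPolynomial ℕ ℤ) : Prop :=
  ∀ a b, a < r → b < r → NestLe f a b → NestLe f b a → a = b

section LowDefectNesting

variable {r r₁ r₂ C C₁ C₂ : ℕ} {f f₁ f₂ : MvPolynomial ℕ ℤ}

theorem not_nestLe_of_mem_support {m : ℕ →₀ ℕ} (hm : m ∈ f.support) {a b : ℕ} (ha : m a ≠ 0)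
    (hb : m b = 0) : ¬ NestLe f a b :=
  fun h => h m hm ha hb

theorem LDP.nestLeAntisymm_mul (h₁ : LDP r₁ f₁ C₁) (h₂ : LDP r₂ f₂ C₂)
    (A₁ : NestLeAntisymm r₁ f₁) (A₂ : NestLeAntisymm r₂ f₂) :
    NestLeAntisymm (r₁ + r₂) (f₁ * rename (· + r₁) f₂) := by
  set F := f₁ * rename (· + r₁) f₂
  have hshift (m : ℕ →₀ ℕ) (i : ℕ) : m.mapDomain (· + r₁) (i + r₁) = m i :=
    Finsupp.mapDomain_apply (add_left_injective r₁) m i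
  have hshift_lt (m : ℕ →₀ ℕ) {i : ℕ} (hi : i < r₁) : m.mapDomain (· + r₁) i = 0 :=
    Finsupp.mapDomain_of_notMem_range m i fun ⟨j, hj⟩ => by simp only at hj; omega
  have hleft {m} (hm : m ∈ f₁.support) : m ∈ F.support := by
    simpa using h₁.add_mapDomain_mem_support_mul h₂ hm h₂.zero_mem_support
  have hright {m} (hm : m ∈ f₂.support) : m.mapDomain (· + r₁) ∈ F.support := by
    simpa using h₁.add_mapDomain_mem_support_mul h₂ h₁.zero_mem_support hm
  have hcross {a b : ℕ} (ha : a < r₁) (hb : r₁ ≤ b) (hb' : b < r₁ + r₂) :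
      ¬ NestLe F a b ∧ ¬ NestLe F b a := by
    obtain ⟨b, rfl⟩ := Nat.exists_eq_add_of_le' hb
    obtain ⟨m₁, hm₁, hm₁a⟩ := h₁.exists_mem_support_apply_ne_zero ha
    obtain ⟨m₂, hm₂, hm₂b⟩ := h₂.exists_mem_support_apply_ne_zero (show b < r₂ by omega)
    exact ⟨not_nestLe_of_mem_support (hleft hm₁) hm₁a (h₁.apply_eq_zero_of_mem_support hm₁ hb),
      not_nestLe_of_mem_support (hright hm₂) (by rwa [hshift]) (hshift_lt m₂ ha)⟩
  intro a b ha hb hab hba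
  rcases lt_or_ge a r₁ with ha₁ | ha₁ <;> rcases lt_or_ge b r₁ with hb₁ | hb₁
  · refine A₁ a b ha₁ hb₁ ?_ ?_ <;>
      exact NestLe.of_forall_mem_support (fun m hm => ⟨m, hleft hm, rfl, rfl⟩) ‹_›
  · exact absurd hab (hcross ha₁ hb₁ hb).1
  · exact absurd hab (hcross hb₁ ha₁ ha).2
  · obtain ⟨a, rfl⟩ := Nat.exists_eq_add_of_le' ha₁
    obtain ⟨b, rfl⟩ := Nat.exists_eq_add_of_le' hb₁
    have hdown {x y : ℕ} : NestLe F (x + r₁) (y + r₁) → NestLe f₂ x y :=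
      NestLe.of_forall_mem_support fun m hm => ⟨_, hright hm, hshift m x, hshift m y⟩
    rw [A₂ a b (by omega) (by omega) (hdown hab) (hdown hba)]

theorem LDP.nestLeAntisymm_step (h : LDP r f C) (c : ℕ) (A : NestLeAntisymm r f) :
    NestLeAntisymm (r + 1) (f * X r + MvPolynomial.C (c : ℤ)) := by
  set F := f * X r + MvPolynomial.C (c : ℤ)
  have hdown {a b : ℕ} (ha : a < r) (hb : b < r) : NestLe F a b → NestLe f a b :=
    NestLe.of_forall_mem_support fun m hm => ⟨_, h.add_single_mem_support_step c hm,
      by simp [ha.ne'], by simp [hb.ne']⟩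
  -- witnessed by the monomial `x_r`, which comes from the constant term of `f`
  have htop {a : ℕ} (ha : a < r) : ¬ NestLe F r a := by
    refine not_nestLe_of_mem_support (h.add_single_mem_support_step c h.zero_mem_support) ?_ ?_
    · simp
    · simp [ha.ne']
  intro a b ha hb hab hba
  rcases Nat.lt_succ_iff_lt_or_eq.1 ha with ha | rfl <;>
    rcases Nat.lt_succ_iff_lt_or_eq.1 hb with hb | rfl
  · exact A a b ha hb (hdown ha hb hab) (hdown hb ha hba)
  · exact absurd hba (htop ha)
  · exact absurd hab (htop hb)
  · rfl

theorem LDP.nestLeAntisymm (h : LDP r f C) : NestLeAntisymm r f := by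
  induction h with
  | const => exact fun a _ ha => absurd ha (Nat.not_lt_zero a)
  | mul h₁ h₂ A₁ A₂ => exact h₁.nestLeAntisymm_mul h₂ A₁ A₂
  | step c _ _ _ h A => exact h.nestLeAntisymm_step c A

end LowDefectNesting

noncomputable def subst3Pair (r : ℕ) (f : MvPolynomial ℕ ℤ) (C : ℕ) (p : ℕ → Option ℕ) :
    ℕ × MvPolynomial ℕ ℤ × ℕ :=
  (starCount r p, subst3 f p, C + 3 * ∑ i ∈ Finset.range r, (p i).getD 0)

def FixedDownwardClosed (r : ℕ) (f : MvPolynomial ℕ ℤ) (p : ℕ → Option ℕ) : Prop :=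
  ∀ i j, i < r → j < r → NestLe f i j → p j ≠ none → p i ≠ none

section Truncation

variable {r C : ℕ} {f : MvPolynomial ℕ ℤ} {p q : ℕ → Option ℕ}

theorem subst3Pair_of_forall_eq_none (h : ∀ j, p j = none) : subst3Pair r f C p = (r, f, C) := by
  have hid : subst3Var p = X := funext fun j => by
    rw [subst3Var_of_eq_none (h j), starCount_of_forall_eq_none h]
  simp [subst3Pair, starCount_of_forall_eq_none h, subst3_eq_aeval, hid, h]

theorem subst3Pair_fillStars {r' D : ℕ} {g : MvPolynomial ℕ ℤ}
    (h : subst3Pair r f C p = (r', g, D)) (q : ℕ → Option ℕ) :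
    subst3Pair r f C (fillStars p q) = subst3Pair r' g D q := by
  simp only [subst3Pair, Prod.mk.injEq] at h
  obtain ⟨rfl, rfl, rfl⟩ := h
  simp only [subst3Pair, starCount_fillStars, subst3_subst3, sum_getD_fillStars, mul_add, add_assoc]

theorem starCount_succ_fixVar {i : ℕ} (k : ℕ) (hi : i < r + 1) :
    starCount (r + 1) (fixVar i k) = r := by
  rw [starCount_fixVar, if_neg (by omega), Nat.add_sub_cancel]

theorem subst3Pair_fixVar {i : ℕ} (k : ℕ) (hi : i < r + 1) :
    subst3Pair (r + 1) f C (fixVar i k) = (r, truncAt f i k, C + 3 * k) := by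
  rw [subst3Pair, starCount_succ_fixVar k hi, sum_getD_fixVar hi, truncAt_eq_subst3]

theorem FixedDownwardClosed.of_fillStars (hf : CoeffNonneg f)
    (hdc : FixedDownwardClosed r f (fillStars p q)) :
    FixedDownwardClosed (starCount r p) (subst3 f p) q := by
  intro a b ha hb hab hqb
  obtain ⟨a, har, hpa, rfl⟩ := exists_starCount_eq ha
  obtain ⟨b, hbr, hpb, rfl⟩ := exists_starCount_eq hb
  rw [← fillStars_of_eq_none (q := q) hpa]
  exact hdc a b har hbr ((hf.nestLe_subst3_iff hpa hpb).1 hab) (by rwa [fillStars_of_eq_none hpb])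

theorem FixedDownwardClosed.fillStars_fixVar (hf : CoeffNonneg f) (hanti : NestLeAntisymm r f)
    (hdc : FixedDownwardClosed r f q) {i : ℕ} (k : ℕ)
    (hmin : IsMinVar (starCount r q) (subst3 f q) i) :
    FixedDownwardClosed r f (fillStars q (fixVar i k)) := by
  intro a b ha hb hab hfb
  cases hqa : q a with
  | some k' => rw [fillStars_of_eq_some hqa]; exact Option.some_ne_none k'
  | none =>
    have hqb : q b = none := by
      by_contra hqb
      exact hdc a b ha hb hab hqb hqa
    have hib : starCount b q = i := by
      by_contra hne
      rw [fillStars_of_eq_none hqb] at hfb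
      exact hfb (if_neg hne)
    -- `x_b` became the minimal variable `x_i`, so `x_b ⪯ x_a` forces `a = b`
    have hab' := (hf.nestLe_subst3_iff hqa hqb).2 hab
    rw [hib] at hab'
    have hba := hmin.2 _ (starCount_lt_starCount hqa ha) hab'
    rw [← hib, hf.nestLe_subst3_iff hqb hqa] at hba
    rwa [hanti a b ha hb hab hba]

theorem FixedDownwardClosed.exists_isMinVar (hdc : FixedDownwardClosed r f p) {j : ℕ}
    (hj : j < r) (hpj : p j ≠ none) : ∃ i, p i ≠ none ∧ IsMinVar r f i := by
  classical
  set S := (Finset.range r).filter (p · ≠ none)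
  set occ : ℕ → Finset (ℕ →₀ ℕ) := fun x => f.support.filter (· x ≠ 0)
  have hmemS {x : ℕ} : x ∈ S ↔ x < r ∧ p x ≠ none := by simp [S]
  -- a fixed variable occurring in the fewest monomials is minimal
  obtain ⟨i, hiS, hmin⟩ := S.exists_min_image (fun x => (occ x).card) ⟨j, hmemS.2 ⟨hj, hpj⟩⟩
  obtain ⟨hir, hpi⟩ := hmemS.1 hiS
  refine ⟨i, hpi, hir, fun l hl hli => ?_⟩
  have hsub : occ l ⊆ occ i := fun m hm => by
    simp only [occ, Finset.mem_filter] at hm ⊢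
    exact ⟨hm.1, hli m hm.1 hm.2⟩
  have heq := Finset.eq_of_subset_of_card_le hsub (hmin l (hmemS.2 ⟨hl, hdc l i hl hir hli hpi⟩))
  intro m hm hmi
  have : m ∈ occ l := heq ▸ Finset.mem_filter.2 ⟨hm, hmi⟩
  exact (Finset.mem_filter.1 this).2

theorem fillStars_fixVar_skip {i k : ℕ} (hk : p i = some k) :
    fillStars (fixVar i k) (fun a => p (if a < i then a else a + 1)) = p := by
  funext j
  rw [fillStars_fixVar]
  rcases lt_trichotomy j i with h | rfl | h
  · simp [h, h.ne, h.le]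
  · simp [hk]
  · simp [h.ne', h.not_ge, show ¬ j - 1 < i by omega, show j - 1 + 1 = j by omega]

theorem reflTransGen_directTrunc_subst3Pair (hf : CoeffNonneg f) (hp : ∀ j, r ≤ j → p j = none)
    (hdc : FixedDownwardClosed r f p) :
    Relation.ReflTransGen DirectTrunc (r, f, C) (subst3Pair r f C p) := by
  induction r generalizing f C p with
  | zero => rw [subst3Pair_of_forall_eq_none fun j => hp j (Nat.zero_le j)]
  | succ r ih =>
    by_cases hall : ∀ j, p j = none
    · rw [subst3Pair_of_forall_eq_none hall]
    push Not at hall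
    obtain ⟨j, hpj⟩ := hall
    have hj : j < r + 1 := by
      by_contra hj
      exact hpj (hp j (not_lt.1 hj))
    obtain ⟨i, hpi, hmin⟩ := hdc.exists_isMinVar hj hpj
    obtain ⟨k, hk⟩ := Option.ne_none_iff_exists'.1 hpi
    set q : ℕ → Option ℕ := fun a => p (if a < i then a else a + 1)
    have hpq := fillStars_fixVar_skip hk
    have hir := hmin.1
    have hq : ∀ j, r ≤ j → q j = none := fun j hj => hp _ (by split_ifs <;> omega)
    rw [← hpq] at hdc ⊢
    have hdc' := hdc.of_fillStars hf
    rw [starCount_succ_fixVar k hir, ← truncAt_eq_subst3] at hdc'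
    rw [subst3Pair_fillStars (subst3Pair_fixVar k hir)]
    have hf' : CoeffNonneg (truncAt f i k) := by
      rw [truncAt_eq_subst3]
      exact coeffNonneg_subst3 hf _
    exact .head ⟨i, k, rfl, hmin, rfl, rfl⟩ (ih hf' hq hdc')

theorem exists_subst3Pair_eq_of_reflTransGen (hf : CoeffNonneg f) (hanti : NestLeAntisymm r f)
    {x : ℕ × MvPolynomial ℕ ℤ × ℕ} (h : Relation.ReflTransGen DirectTrunc (r, f, C) x) :
    ∃ q : ℕ → Option ℕ, (∀ j, r ≤ j → q j = none) ∧ FixedDownwardClosed r f q ∧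
      x = subst3Pair r f C q := by
  induction h with
  | refl =>
    exact ⟨fun _ => none, fun _ _ => rfl, fun _ _ _ _ _ h => absurd rfl h,
      (subst3Pair_of_forall_eq_none fun _ => rfl).symm⟩
  | @tail _ y _ hstep ih =>
    obtain ⟨q, hq, hdc, rfl⟩ := ih
    obtain ⟨i, k, hdeg, hmin, hg, hD⟩ := hstep
    have hir : i < starCount r q := hmin.1
    refine ⟨fillStars q (fixVar i k), fun j hj => ?_, hdc.fillStars_fixVar hf hanti k hmin, ?_⟩
    · rw [fillStars_of_eq_none (hq j hj)]
      have : starCount r q ≤ starCount j q := starCount_mono q hj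
      exact if_neg (by omega)
    · obtain ⟨r', g, D⟩ := y
      simp only [subst3Pair] at hdeg hg hD
      rw [subst3Pair_fillStars rfl, hdeg, subst3Pair_fixVar k (by omega), hg, hD]

end Truncation

/-- 3-substituting a tuple whose fixed coordinates form a
downward closed set of variables yields a truncation, with `δ_{g,D} = δ_{f,C} ∘ ι`;
and all truncations arise this way. -/
theorem subst3_truncation (r : ℕ) (f : MvPolynomial ℕ ℤ) (C : ℕ) (hf : LDP r f C)
    (p : ℕ → Option ℕ) (hp : ∀ j, r ≤ j → p j = none)
    (hdc : ∀ i j, i < r → j < r → NestLe f i j → p j ≠ none → p i ≠ none) :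
    Relation.ReflTransGen DirectTrunc (r, f, C)
      (starCount r p, subst3 f p, C + 3 * ∑ i ∈ Finset.range r, (p i).getD 0) ∧
    (∀ ℓ : ℕ → ℕ,
      dftF (starCount r p) (subst3 f p)
        (C + 3 * ∑ i ∈ Finset.range r, (p i).getD 0) ℓ = dftF r f C (iotaMap p ℓ)) ∧
    (∀ (r' : ℕ) (g : MvPolynomial ℕ ℤ) (D : ℕ),
      Relation.ReflTransGen DirectTrunc (r, f, C) (r', g, D) →
      ∃ q : ℕ → Option ℕ, (∀ j, r ≤ j → q j = none) ∧
        (∀ i j, i < r → j < r → NestLe f i j → q j ≠ none → q i ≠ none) ∧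
        r' = starCount r q ∧ g = subst3 f q ∧
        D = C + 3 * ∑ i ∈ Finset.range r, (q i).getD 0) := by
  refine ⟨reflTransGen_directTrunc_subst3Pair hf.coeffNonneg hp hdc, fun ℓ => dftF_subst3 hp f C ℓ,
    fun r' g D htrunc => ?_⟩
  obtain ⟨q, hq, hdcq, hx⟩ :=
    exists_subst3Pair_eq_of_reflTransGen hf.coeffNonneg hf.nestLeAntisymm htrunc
  simp only [subst3Pair, Prod.mk.injEq] at hx
  exact ⟨q, hq, hdcq, hx⟩
end
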